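/- arXiv:2602.11796 — 9 statements merged into one kernel-verified Lean document; each statement's English description precedes it below -/
import Mathlib

section
/- For all integers n and k with 2 ≤ k ≤ n−2, the cardinality of N(H_k) equals (n−1)! − ∑_{i=0}^{k−1} C(k−1,i)·d_{n−i−1}. -/
/-- `H_k ⊂ Σ_n`: permutations `σ` with `σ(1) ≠ 1` and `σ(i) = i` for all
`i ∈ [k+1, n]` (0-indexed: `σ 0 ≠ 0` and `σ i = i` for all `i` with `k ≤ i`). -/
def Hfam (n k : ℕ) : Finset (Equiv.Perm (Fin n)) :=
  Finset.univ.filter fun σ =>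
    (∀ i : Fin n, i.val = 0 → σ i ≠ i) ∧ ∀ i : Fin n, k ≤ i.val → σ i = i

/-- `N(H_k)`: permutations `π` with `π(1) = 1` intersecting every member of `H_k`. -/
def Nfam (n k : ℕ) : Finset (Equiv.Perm (Fin n)) :=
  Finset.univ.filter fun π =>
    (∀ i : Fin n, i.val = 0 → π i = i) ∧ ∀ σ ∈ Hfam n k, ∃ i, π i = σ i

/-- `E_k = H_k ∪ N(H_k)`. -/
def Efam (n k : ℕ) : Finset (Equiv.Perm (Fin n)) := Hfam n k ∪ Nfam n k

open Equiv Finset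

/-- `Fin k` is equivalent to the subtype of `Fin n` of values `< k`, when `k ≤ n`. -/
def finSubEquiv (n k : ℕ) (hk : k ≤ n) : Fin k ≃ {i : Fin n // i.val < k} where
  toFun j := ⟨⟨j.1, lt_of_lt_of_le j.2 hk⟩, j.2⟩
  invFun x := ⟨x.1.1, x.2⟩
  left_inv _ := rfl
  right_inv _ := rfl

/-- The partial bijection induced by `π` between the positions `< k` mapped into `[0,k)`
and the values `< k` pulled back from `[0,k)`. -/
def piSubEquiv {n : ℕ} (π : Equiv.Perm (Fin n)) (k : ℕ) :
    {x : {i : Fin n // i.val < k} // (π x.1).val < k} ≃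
    {x : {i : Fin n // i.val < k} // (π.symm x.1).val < k} where
  toFun x := ⟨⟨π x.1.1, x.2⟩, by simpa using x.1.2⟩
  invFun x := ⟨⟨π.symm x.1.1, x.2⟩, by simpa using x.1.2⟩
  left_inv x := Subtype.ext (Subtype.ext (by simp))
  right_inv x := Subtype.ext (Subtype.ext (by simp))

lemma mem_Nfam_iff {n k : ℕ} (hk2 : 2 ≤ k) (hkn : k + 2 ≤ n) (π : Equiv.Perm (Fin n)) :
    π ∈ Nfam n k ↔
      ((∀ i : Fin n, i.val = 0 → π i = i) ∧ ∃ j : Fin n, k ≤ j.val ∧ π j = j) := by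
  classical
  have hkln : k ≤ n := by omega
  constructor
  · intro hπ
    rw [Nfam, Finset.mem_filter] at hπ
    obtain ⟨-, hfix, hint⟩ := hπ
    refine ⟨hfix, ?_⟩
    by_contra hcon
    push_neg at hcon
    -- build a member of `Hfam n k` disjoint from `π`, contradiction
    set gA : Equiv.Perm {i : Fin n // i.val < k} := (piSubEquiv π k).extendSubtype with hgAdef
    set g : Equiv.Perm (Fin n) := gA.subtypeCongr (Equiv.refl _) with hgdef
    set zA : Equiv.Perm {i : Fin n // i.val < k} :=
      (finSubEquiv n k hkln).permCongr (finRotate k) with hzAdef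
    have hrot : ∀ y : Fin k, finRotate k y ≠ y := by
      intro y
      have hy : y ∈ (finRotate k).support := by
        rw [support_finRotate_of_le hk2]; exact Finset.mem_univ y
      exact Equiv.Perm.mem_support.mp hy
    have hzA : ∀ x, zA x ≠ x := by
      intro x h
      have h2 : finRotate k ((finSubEquiv n k hkln).symm x) = (finSubEquiv n k hkln).symm x := by
        have := congrArg (finSubEquiv n k hkln).symm h
        simpa [hzAdef, Equiv.permCongr_apply] using this
      exact hrot _ h2
    set z : Equiv.Perm (Fin n) := zA.subtypeCongr (Equiv.refl _) with hzdef
    have hz_lt : ∀ (i : Fin n) (h : i.val < k), z i = (zA ⟨i, h⟩).1 := fun i h =>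
      Equiv.Perm.subtypeCongr.left_apply zA (Equiv.refl _) h
    have hz_ge : ∀ i : Fin n, ¬i.val < k → z i = i := by
      intro i h
      exact Equiv.Perm.subtypeCongr.right_apply zA (Equiv.refl _) h
    have hzlt' : ∀ (i : Fin n) (h : i.val < k), (z i).val < k := by
      intro i h; rw [hz_lt i h]; exact (zA ⟨i, h⟩).2
    have hzne : ∀ (i : Fin n) (h : i.val < k), z i ≠ i := by
      intro i h hc
      apply hzA ⟨i, h⟩
      apply Subtype.ext
      rw [← hz_lt i h]; exact hc
    have hg_lt : ∀ (i : Fin n) (h : i.val < k), g i = (gA ⟨i, h⟩).1 := fun i h =>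
      Equiv.Perm.subtypeCongr.left_apply gA (Equiv.refl _) h
    have hg_ge : ∀ i : Fin n, ¬i.val < k → g i = i := by
      intro i h
      exact Equiv.Perm.subtypeCongr.right_apply gA (Equiv.refl _) h
    have hglt' : ∀ (i : Fin n) (h : i.val < k), (g i).val < k := by
      intro i h; rw [hg_lt i h]; exact (gA ⟨i, h⟩).2
    have hg_pi : ∀ (i : Fin n) (h : i.val < k), (π i).val < k → g i = π i := by
      intro i h h2
      have h3 := Equiv.extendSubtype_apply_of_mem (piSubEquiv π k) ⟨i, h⟩ h2
      exact (hg_lt i h).trans (congrArg Subtype.val h3)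
    set σ : Equiv.Perm (Fin n) := z.trans g with hσdef
    have hσ_apply : ∀ i : Fin n, σ i = g (z i) := fun i => rfl
    have hfix0 : ∀ i : Fin n, i.val = 0 → π i = i := hfix
    have hdisj : ∀ i : Fin n, σ i ≠ π i := by
      intro i heq
      by_cases hik : i.val < k
      · by_cases hπik : (π i).val < k
        · have hgi : g i = π i := hg_pi i hik hπik
          have : g (z i) = g i := by rw [← hσ_apply, heq, hgi]
          exact hzne i hik (g.injective this)
        · have : (σ i).val < k := by
            rw [hσ_apply]; exact hglt' _ (hzlt' i hik)
          rw [heq] at this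
          exact hπik this
      · have hσi : σ i = i := by rw [hσ_apply, hz_ge i hik, hg_ge i hik]
        rw [hσi] at heq
        exact hcon i (le_of_not_gt hik) heq.symm
    have hσH : σ ∈ Hfam n k := by
      rw [Hfam, Finset.mem_filter]
      refine ⟨Finset.mem_univ _, fun i hi hc => ?_, fun i hi => ?_⟩
      · have hik : i.val < k := by omega
        have hπi : π i = i := hfix0 i hi
        have hπik : (π i).val < k := by rw [hπi]; omega
        have hgi : g i = i := by rw [hg_pi i hik hπik, hπi]
        have : g (z i) = g i := by rw [← hσ_apply, hc, hgi]
        exact hzne i hik (g.injective this)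
      · have h' : ¬i.val < k := by omega
        rw [hσ_apply, hz_ge i h', hg_ge i h']
    obtain ⟨i, hi⟩ := hint σ hσH
    exact hdisj i hi.symm
  · rintro ⟨hfix, j, hj, hπj⟩
    rw [Nfam, Finset.mem_filter]
    refine ⟨Finset.mem_univ _, hfix, fun σ hσ => ?_⟩
    rw [Hfam, Finset.mem_filter] at hσ
    exact ⟨j, by rw [hπj, hσ.2.2 j hj]⟩

theorem card_Nfam_eq (n k : ℕ) (hk2 : 2 ≤ k) (hkn : k ≤ n - 2) :
    ((Nfam n k).card : ℤ) = (Nat.factorial (n - 1) : ℤ)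
      - ∑ i ∈ Finset.range k,
          (Nat.choose (k - 1) i : ℤ) * (numDerangements (n - i - 1) : ℤ) := by
  classical
  have hkn' : k + 2 ≤ n := by omega
  have h0n : 0 < n := by omega
  set i0 : Fin n := ⟨0, h0n⟩ with hi0
  set P : Equiv.Perm (Fin n) → Prop := fun π => ∀ i : Fin n, i.val = 0 → π i = i with hP
  set Fix0 : Finset (Equiv.Perm (Fin n)) := univ.filter P with hFix0def
  set Q : Equiv.Perm (Fin n) → Prop := fun π => ∃ j : Fin n, k ≤ j.val ∧ π j = j with hQ
  have h1 : Nfam n k = Fix0.filter Q := by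
    ext π
    rw [mem_Nfam_iff hk2 hkn' π, hFix0def, Finset.mem_filter, Finset.mem_filter]
    constructor
    · rintro ⟨h1, h2⟩; exact ⟨⟨Finset.mem_univ _, h1⟩, h2⟩
    · rintro ⟨⟨-, h1⟩, h2⟩; exact ⟨h1, h2⟩
  set Bad : Finset (Equiv.Perm (Fin n)) := Fix0.filter (fun π => ¬ Q π) with hBaddef
  have hsum : (Nfam n k).card + Bad.card = Fix0.card := by
    rw [h1, hBaddef]
    exact Finset.card_filter_add_card_filter_not Q
  -- cardinality of Fix0
  have hsub0 : (univ.filter fun x : Fin n => x.val = 0) = {i0} := by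
    ext x
    simp [Fin.ext_iff, hi0]
  have hcard0 : Fintype.card {x : Fin n // x.val = 0} = 1 := by
    rw [Fintype.card_subtype, hsub0, Finset.card_singleton]
  have hFix0 : Fix0.card = Nat.factorial (n - 1) := by
    rw [hFix0def, ← Fintype.card_subtype]
    have e1 : {π : Equiv.Perm (Fin n) // P π} ≃
        {f : Equiv.Perm (Fin n) // ∀ a : Fin n, ¬¬(a.val = 0) → f a = a} :=
      Equiv.subtypeEquivRight (fun f => by
        constructor
        · intro h a ha; exact h a (not_not.mp ha)
        · intro h a ha; exact h a (not_not_intro ha))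
    have e2 : Equiv.Perm (Subtype fun a : Fin n => ¬(a.val = 0)) ≃
        {f : Equiv.Perm (Fin n) // ∀ a : Fin n, ¬¬(a.val = 0) → f a = a} :=
      Equiv.Perm.subtypeEquivSubtypePerm _
    rw [Fintype.card_congr (e1.trans e2.symm), Fintype.card_perm]
    congr 1
    rw [Fintype.card_subtype_compl, hcard0, Fintype.card_fin]
  -- cardinality of Bad, fiberwise over the finite fixed point sets
  set K1 : Finset (Fin n) := univ.filter (fun a => a.val ≠ 0 ∧ a.val < k) with hK1def
  have hK1card : K1.card = k - 1 := by
    have hmap : K1.map Fin.valEmbedding = (Finset.range k).filter (· ≠ 0) := by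
      ext a
      simp only [Finset.mem_map, hK1def, Finset.mem_filter, Finset.mem_univ, true_and,
        Fin.valEmbedding_apply, Finset.mem_range]
      constructor
      · rintro ⟨x, ⟨hx0, hxk⟩, rfl⟩; exact ⟨hxk, hx0⟩
      · rintro ⟨hak, ha0⟩
        exact ⟨⟨a, lt_of_lt_of_le hak (by omega)⟩, ⟨ha0, hak⟩, rfl⟩
    have := congrArg Finset.card hmap
    rw [Finset.card_map] at this
    rw [this, Finset.filter_ne', Finset.card_erase_of_mem (Finset.mem_range.mpr (by omega)),
      Finset.card_range]
  have hmaps : ∀ π ∈ Bad, ((univ.filter fun a => π a = a).erase i0) ∈ K1.powerset := by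
    intro π hπ
    rw [hBaddef, Finset.mem_filter, hFix0def, Finset.mem_filter] at hπ
    obtain ⟨⟨-, hfix⟩, hnq⟩ := hπ
    rw [Finset.mem_powerset]
    intro a ha
    rw [Finset.mem_erase, Finset.mem_filter] at ha
    obtain ⟨hane, -, hafix⟩ := ha
    rw [hK1def, Finset.mem_filter]
    refine ⟨Finset.mem_univ _, fun h0 => hane (Fin.ext h0), ?_⟩
    by_contra hge
    exact hnq ⟨a, le_of_not_gt hge, hafix⟩
  have hBadcard : Bad.card = ∑ F ∈ K1.powerset, numDerangements (n - 1 - F.card) := by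
    rw [Finset.card_eq_sum_card_fiberwise hmaps]
    refine Finset.sum_congr rfl fun F hF => ?_
    rw [Finset.mem_powerset] at hF
    have hi0F : i0 ∉ F := by
      intro h
      have := hF h
      rw [hK1def, Finset.mem_filter] at this
      exact this.2.1 rfl
    -- the fiber is the set of permutations with fixed point set exactly F ∪ {i0}
    have hfiber : (Bad.filter fun π => (univ.filter fun a => π a = a).erase i0 = F) =
        univ.filter (fun π : Equiv.Perm (Fin n) => ∀ a, π a = a ↔ (a ∈ F ∨ a = i0)) := by
      ext π
      simp only [hBaddef, hFix0def, Finset.mem_filter, Finset.mem_univ, true_and]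
      constructor
      · rintro ⟨⟨hfix, hnq⟩, hfe⟩
        refine fun a => ⟨fun ha => ?_, ?_⟩
        · by_cases h : a = i0
          · exact Or.inr h
          · left
            rw [← hfe, Finset.mem_erase, Finset.mem_filter]
            exact ⟨h, Finset.mem_univ _, ha⟩
        · rintro (haF | rfl)
          · rw [← hfe, Finset.mem_erase, Finset.mem_filter] at haF
            exact haF.2.2
          · exact hfix i0 rfl
      · intro hiff
        have hfixa : ∀ i : Fin n, i.val = 0 → π i = i := by
          intro i hi
          have : i = i0 := Fin.ext hi
          rw [this]
          exact (hiff i0).mpr (Or.inr rfl)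
        refine ⟨⟨hfixa, ?_⟩, ?_⟩
        · rintro ⟨j, hjk, hjfix⟩
          rcases (hiff j).mp hjfix with hjF | rfl
          · have := hF hjF
            rw [hK1def, Finset.mem_filter] at this
            omega
          · simp [hi0] at hjk; omega
        · ext a
          rw [Finset.mem_erase, Finset.mem_filter]
          constructor
          · rintro ⟨hane, -, hafix⟩
            rcases (hiff a).mp hafix with h | h
            · exact h
            · exact absurd h hane
          · intro haF
            have hane : a ≠ i0 := by
              intro h
              exact hi0F (h ▸ haF)
            exact ⟨hane, Finset.mem_univ _, (hiff a).mpr (Or.inl haF)⟩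
    rw [hfiber, ← Fintype.card_subtype]
    have e1 : {π : Equiv.Perm (Fin n) // ∀ a, π a = a ↔ (a ∈ F ∨ a = i0)} ≃
        derangements (Subtype fun a : Fin n => ¬(a ∈ F ∨ a = i0)) := by
      refine Equiv.symm ((derangements.subtypeEquiv _).trans (Equiv.subtypeEquivRight fun f => ?_))
      simp only [Function.mem_fixedPoints_iff, not_not]
      exact ⟨fun h a => (h a).symm, fun h a => (h a).symm⟩
    rw [Fintype.card_congr e1, card_derangements_eq_numDerangements]
    congr 1
    have hq : (univ.filter fun a : Fin n => a ∈ F ∨ a = i0) = insert i0 F := by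
      ext a
      simp [or_comm]
    rw [Fintype.card_subtype_compl, Fintype.card_fin, Fintype.card_subtype, hq,
      Finset.card_insert_of_notMem hi0F]
    omega
  -- assemble
  have hBadsum : Bad.card = ∑ i ∈ Finset.range k, Nat.choose (k - 1) i
      * numDerangements (n - i - 1) := by
    rw [hBadcard, Finset.sum_powerset_apply_card (fun m => numDerangements (n - 1 - m)), hK1card]
    have hr : k - 1 + 1 = k := by omega
    rw [hr]
    refine Finset.sum_congr rfl fun i _ => ?_
    have hni : n - 1 - i = n - i - 1 := by omega
    rw [smul_eq_mul, hni]
  have hZ : ((Nfam n k).card : ℤ) + (Bad.card : ℤ) = (Nat.factorial (n - 1) : ℤ) := by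
    rw [← hFix0]
    exact_mod_cast congrArg (Nat.cast : ℕ → ℤ) hsum
  have hBZ : (Bad.card : ℤ) = ∑ i ∈ Finset.range k,
      (Nat.choose (k - 1) i : ℤ) * (numDerangements (n - i - 1) : ℤ) := by
    rw [hBadsum]
    push_cast
    rfl
  rw [← hBZ]
  omega
end

section
/- For all integers n and k with 2 ≤ k ≤ n−2, the cardinality of E_k equals (n−1)! − ∑_{i=0}^{k−1} C(k−1,i)·d_{n−1−i} + k! − (k−1)!. -/
open Finset Equiv Function

section Generic

variable {α : Type*} [Fintype α] [DecidableEq α]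

lemma card_perm_fixing (p : α → Prop) [DecidablePred p] :
    Fintype.card {f : Equiv.Perm α // ∀ a, ¬ p a → f a = a}
      = (Fintype.card (Subtype p)).factorial := by
  rw [← Fintype.card_perm, Fintype.card_congr (Equiv.Perm.subtypeEquivSubtypePerm p).symm]

lemma card_perm_fixedset (F : Finset α) :
    Fintype.card {f : Equiv.Perm α // ∀ a, f a = a ↔ a ∈ F}
      = numDerangements (Fintype.card α - F.card) := by
  have e2 : {f : Equiv.Perm α // ∀ a, f a = a ↔ a ∈ F}
      ≃ {f : Equiv.Perm α // ∀ a, ¬ a ∉ F ↔ a ∈ Function.fixedPoints f} :=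
    Equiv.subtypeEquivRight (fun f => by
      simp only [not_not, Function.mem_fixedPoints_iff]
      exact ⟨fun h a => (h a).symm, fun h a => (h a).symm⟩)
  rw [Fintype.card_congr (e2.trans (derangements.subtypeEquiv (fun a : α => a ∉ F)).symm)]
  rw [card_derangements_eq_numDerangements]
  congr 1
  rw [Fintype.card_subtype_compl, Fintype.card_coe]

lemma card_perm_avoiding (q : α → Prop) [DecidablePred q] :
    (univ.filter fun π : Equiv.Perm α => ∀ a, q a → π a ≠ a).card
      = ∑ i ∈ Finset.range ((univ.filter fun a => ¬ q a).card + 1),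
          ((univ.filter fun a => ¬ q a).card.choose i)
            * numDerangements (Fintype.card α - i) := by
  set M := univ.filter fun a => ¬ q a with hM
  have hpart : (univ.filter fun π : Equiv.Perm α => ∀ a, q a → π a ≠ a)
      = M.powerset.biUnion
          (fun F => univ.filter fun π : Equiv.Perm α => ∀ a, π a = a ↔ a ∈ F) := by
    ext π
    simp only [mem_filter, mem_univ, true_and, mem_biUnion, mem_powerset]
    constructor
    · intro h
      refine ⟨univ.filter fun a => π a = a, ?_, ?_⟩
      · intro a ha
        simp only [mem_filter, mem_univ, true_and] at ha
        simp only [hM, mem_filter, mem_univ, true_and]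
        exact fun hq => h a hq ha
      · intro a; simp
    · rintro ⟨F, hF, hfix⟩ a hqa heq
      have := hF ((hfix a).mp heq)
      rw [hM, mem_filter] at this
      exact this.2 hqa
  rw [hpart, Finset.card_biUnion]
  · have hcard : ∀ F ∈ M.powerset,
        (univ.filter fun π : Equiv.Perm α => ∀ a, π a = a ↔ a ∈ F).card
          = numDerangements (Fintype.card α - F.card) := by
      intro F _
      rw [← Fintype.card_subtype]
      exact card_perm_fixedset F
    rw [Finset.sum_congr rfl hcard, Finset.sum_powerset]
    refine Finset.sum_congr rfl fun j hj => ?_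
    rw [Finset.sum_congr rfl (fun F hF => ?_), Finset.sum_const,
      Finset.card_powersetCard, smul_eq_mul]
    rw [(Finset.mem_powersetCard.mp hF).2]
  · intro F hF F' hF' hne
    simp only [Finset.disjoint_left, mem_filter, mem_univ, true_and]
    intro π h1 h2
    exact hne (by ext a; rw [← h1 a, ← h2 a])

lemma card_perm_fixing2 (p : α → Prop) [DecidablePred p]
    (q : Equiv.Perm α → Prop) [DecidablePred q]
    (hq : ∀ σ, q σ ↔ ∀ a, ¬ p a → σ a = a) :
    (univ.filter q).card = (Fintype.card (Subtype p)).factorial := by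
  rw [Finset.filter_congr (fun σ _ => hq σ), ← Fintype.card_subtype]
  exact card_perm_fixing p

lemma card_perm_avoiding2 (p : α → Prop) [DecidablePred p]
    (q : Equiv.Perm α → Prop) [DecidablePred q]
    (hq : ∀ σ, q σ ↔ ∀ a, p a → σ a ≠ a) :
    (univ.filter q).card = ∑ i ∈ Finset.range (Fintype.card {a // ¬ p a} + 1),
        (Fintype.card {a // ¬ p a}).choose i * numDerangements (Fintype.card α - i) := by
  rw [Finset.filter_congr (fun σ _ => hq σ), card_perm_avoiding p, Fintype.card_subtype]

end Generic

section CardSub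

lemma card_val_lt (n k : ℕ) (h : k ≤ n) : Fintype.card {i : Fin n // i.val < k} = k := by
  have e : {i : Fin n // i.val < k} ≃ Fin k :=
    { toFun := fun x => ⟨x.1.val, x.2⟩
      invFun := fun j => ⟨⟨j.val, lt_of_lt_of_le j.isLt h⟩, j.isLt⟩
      left_inv := fun x => by apply Subtype.ext; apply Fin.ext; rfl
      right_inv := fun j => rfl }
  rw [Fintype.card_congr e, Fintype.card_fin]

lemma card_val_mid (n k : ℕ) (h : k ≤ n) :
    Fintype.card {i : Fin n // 0 < i.val ∧ i.val < k} = k - 1 := by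
  have e : {i : Fin n // 0 < i.val ∧ i.val < k} ≃ Fin (k - 1) :=
    { toFun := fun x => ⟨x.1.val - 1, by have := x.2; omega⟩
      invFun := fun j => ⟨⟨j.val + 1, by have := j.isLt; omega⟩,
        ⟨Nat.succ_pos _, by have := j.isLt; show j.val + 1 < k; omega⟩⟩
      left_inv := fun x => Subtype.ext (Fin.ext
        (show x.1.val - 1 + 1 = x.1.val by have := x.2; omega))
      right_inv := fun j => Fin.ext (show j.val + 1 - 1 = j.val by omega) }
  rw [Fintype.card_congr e, Fintype.card_fin]

lemma card_val_pos (n : ℕ) : Fintype.card {i : Fin n // 0 < i.val} = n - 1 := by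
  have e : {i : Fin n // 0 < i.val} ≃ Fin (n - 1) :=
    { toFun := fun x => ⟨x.1.val - 1, by have := x.1.isLt; have := x.2; omega⟩
      invFun := fun j => ⟨⟨j.val + 1, by have := j.isLt; omega⟩, Nat.succ_pos _⟩
      left_inv := fun x => Subtype.ext (Fin.ext
        (show x.1.val - 1 + 1 = x.1.val by have := x.2; omega))
      right_inv := fun j => Fin.ext (show j.val + 1 - 1 = j.val by omega) }
  rw [Fintype.card_congr e, Fintype.card_fin]

lemma card_val_pos_lt (n k : ℕ) (h : k ≤ n) :
    Fintype.card {a : {i : Fin n // 0 < i.val} // ¬ k ≤ (a : Fin n).val} = k - 1 := by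
  have e : {a : {i : Fin n // 0 < i.val} // ¬ k ≤ (a : Fin n).val} ≃ Fin (k - 1) :=
    { toFun := fun x => ⟨x.1.1.val - 1, by have := x.1.2; have := x.2; omega⟩
      invFun := fun j => ⟨⟨⟨j.val + 1, by have := j.isLt; omega⟩, Nat.succ_pos _⟩,
        by have := j.isLt; show ¬ k ≤ j.val + 1; omega⟩
      left_inv := fun x => Subtype.ext (Subtype.ext (Fin.ext
        (show x.1.1.val - 1 + 1 = x.1.1.val by have := x.1.2; omega)))
      right_inv := fun j => Fin.ext (show j.val + 1 - 1 = j.val by omega) }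
  rw [Fintype.card_congr e, Fintype.card_fin]

end CardSub

lemma exists_avoiding (n k : ℕ) (hk2 : 2 ≤ k) (hkn : k + 2 ≤ n) (π : Equiv.Perm (Fin n))
    (h0 : ∀ i : Fin n, i.val = 0 → π i = i) (hnf : ∀ i : Fin n, k ≤ i.val → π i ≠ i) :
    ∃ σ ∈ Hfam n k, ∀ i, π i ≠ σ i := by
  set p : Fin n → Prop := fun x => x.val < k with hp
  have hcardT : Fintype.card (Subtype p) = k := card_val_lt n k (by omega)
  set t : Subtype p → Finset (Subtype p) := fun i =>
    univ.filter fun x : Subtype p =>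
      ((i : Fin n).val = 0 → (x : Fin n).val ≠ 0) ∧ π (i : Fin n) ≠ (x : Fin n) with ht
  have htcard : ∀ i, k - 1 ≤ (t i).card := by
    intro i
    have key : ∀ x : Subtype p,
        ¬ (((i : Fin n).val = 0 → (x : Fin n).val ≠ 0) ∧ π (i : Fin n) ≠ (x : Fin n)) →
        (x : Fin n) = (if (i : Fin n).val = 0 then (i : Fin n) else π (i : Fin n)) := by
      intro x hx
      by_cases hiv : (i : Fin n).val = 0
      · rw [if_pos hiv]
        rcases not_and_or.mp hx with h | h
        · rw [Classical.not_imp, not_not] at h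
          exact Fin.ext (h.2.trans hiv.symm)
        · rw [not_not] at h
          rw [← h, h0 _ hiv]
      · rw [if_neg hiv]
        rcases not_and_or.mp hx with h | h
        · rw [Classical.not_imp] at h; exact absurd h.1 hiv
        · rw [not_not] at h; exact h.symm
    have hc1 : (univ.filter fun x : Subtype p =>
        ¬ (((i : Fin n).val = 0 → (x : Fin n).val ≠ 0) ∧ π (i : Fin n) ≠ (x : Fin n))).card ≤ 1 := by
      refine Finset.card_le_one.mpr fun a ha b hb => ?_
      rw [mem_filter] at ha hb
      exact Subtype.ext ((key a ha.2).trans (key b hb.2).symm)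
    have := Finset.card_filter_add_card_filter_not (s := (univ : Finset (Subtype p)))
      (p := fun x : Subtype p =>
        ((i : Fin n).val = 0 → (x : Fin n).val ≠ 0) ∧ π (i : Fin n) ≠ (x : Fin n))
    rw [Finset.card_univ, hcardT] at this
    have hti : (t i).card = (univ.filter fun x : Subtype p =>
        ((i : Fin n).val = 0 → (x : Fin n).val ≠ 0) ∧ π (i : Fin n) ≠ (x : Fin n)).card := rfl
    omega
  have hall : ∀ s : Finset (Subtype p), s.card ≤ (s.biUnion t).card := by
    intro s
    rcases s.eq_empty_or_nonempty with rfl | ⟨i, hi⟩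
    · simp
    have hbig : k - 1 ≤ (s.biUnion t).card :=
      le_trans (htcard i) (Finset.card_le_card (Finset.subset_biUnion_of_mem t hi))
    by_cases hs : s.card ≤ k - 1
    · omega
    · have hsk : s.card ≤ k := by rw [← hcardT, ← Finset.card_univ]; exact Finset.card_le_univ s
      have hsu : s = univ := Finset.eq_univ_of_card s (by rw [hcardT]; omega)
      have hsub : (univ : Finset (Subtype p)) ⊆ s.biUnion t := by
        intro x _
        rw [Finset.mem_biUnion]
        by_cases hx : (x : Fin n).val = 0
        · refine ⟨⟨⟨1, by omega⟩, show (1:ℕ) < k by omega⟩, by rw [hsu]; exact mem_univ _, ?_⟩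
          rw [ht, mem_filter]
          refine ⟨mem_univ _, fun h => absurd h (by simp), fun h => ?_⟩
          have hz : π (⟨1, by omega⟩ : Fin n) = (⟨0, by omega⟩ : Fin n) := by
            rw [h]; exact Fin.ext hx
          have h00 : π (⟨0, by omega⟩ : Fin n) = (⟨0, by omega⟩ : Fin n) := h0 _ rfl
          have := π.injective (hz.trans h00.symm)
          simp at this
        · refine ⟨⟨⟨0, by omega⟩, show (0:ℕ) < k by omega⟩, by rw [hsu]; exact mem_univ _, ?_⟩
          rw [ht, mem_filter]
          refine ⟨mem_univ _, fun _ => hx, fun h => ?_⟩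
          have h00 : π (⟨0, by omega⟩ : Fin n) = (⟨0, by omega⟩ : Fin n) := h0 _ rfl
          rw [h00] at h
          exact hx (by rw [← h])
      have h1 : (s.biUnion t).card ≤ k := by
        have := Finset.card_le_univ (s.biUnion t)
        rwa [hcardT] at this
      have h2 : k ≤ (s.biUnion t).card := by
        have := Finset.card_le_card hsub
        rwa [Finset.card_univ, hcardT] at this
      omega
  obtain ⟨f, hfinj, hft⟩ := (Finset.all_card_le_biUnion_card_iff_exists_injective t).mp hall
  set σ' : Equiv.Perm (Subtype p) := Equiv.ofBijective f (Finite.injective_iff_bijective.mp hfinj)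
    with hσ'
  set σ : Equiv.Perm (Fin n) := Equiv.Perm.ofSubtype σ' with hσ
  have happ : ∀ (i : Fin n) (h : i.val < k), σ i = ((f ⟨i, h⟩ : Subtype p) : Fin n) := by
    intro i h
    rw [hσ, Equiv.Perm.ofSubtype_apply_of_mem σ' h]
    rfl
  have hfix : ∀ i : Fin n, ¬ i.val < k → σ i = i := by
    intro i h
    exact Equiv.Perm.ofSubtype_apply_of_not_mem σ' h
  have hne : ∀ i : Fin n, π i ≠ σ i := by
    intro i
    by_cases h : i.val < k
    · rw [happ i h]
      have := hft ⟨i, h⟩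
      rw [ht, mem_filter] at this
      exact this.2.2
    · rw [hfix i h]
      exact hnf i (by omega)
  refine ⟨σ, ?_, hne⟩
  rw [Hfam, mem_filter]
  refine ⟨mem_univ _, fun i hi => ?_, fun i hi => hfix i (by omega)⟩
  have hik : i.val < k := by omega
  rw [happ i hik]
  intro heq
  have := hft ⟨i, hik⟩
  rw [ht, mem_filter] at this
  exact this.2.1 hi (by rw [heq, hi])

theorem card_Efam_eq (n k : ℕ) (hk2 : 2 ≤ k) (hkn : k ≤ n - 2) :
    ((Efam n k).card : ℤ) = (Nat.factorial (n - 1) : ℤ)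
      - ∑ i ∈ Finset.range k,
          (Nat.choose (k - 1) i : ℤ) * (numDerangements (n - 1 - i) : ℤ)
      + (Nat.factorial k : ℤ) - (Nat.factorial (k - 1) : ℤ) := by
  have hn : k + 2 ≤ n := by omega
  -- E = H ⊔ N
  have hdisj : Disjoint (Hfam n k) (Nfam n k) := by
    rw [Finset.disjoint_left]
    intro σ hH hN
    rw [Hfam, mem_filter] at hH
    rw [Nfam, mem_filter] at hN
    exact hH.2.1 ⟨0, by omega⟩ rfl (hN.2.1 ⟨0, by omega⟩ rfl)
  have hEcard : (Efam n k).card = (Hfam n k).card + (Nfam n k).card := by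
    rw [Efam, Finset.card_union_of_disjoint hdisj]
  -- counting H
  have hA : (univ.filter fun σ : Equiv.Perm (Fin n) =>
      ∀ i : Fin n, k ≤ i.val → σ i = i).card = k.factorial := by
    have h := card_perm_fixing2 (fun i : Fin n => i.val < k)
      (fun σ : Equiv.Perm (Fin n) => ∀ i : Fin n, k ≤ i.val → σ i = i)
      (fun σ => ⟨fun h i hi => h i (by omega), fun h i hi => h i (by omega)⟩)
    rw [card_val_lt n k (by omega)] at h
    exact h
  have hA0 : (univ.filter fun σ : Equiv.Perm (Fin n) =>
      ∀ i : Fin n, (i.val = 0 ∨ k ≤ i.val) → σ i = i).card = (k - 1).factorial := by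
    have h := card_perm_fixing2 (fun i : Fin n => 0 < i.val ∧ i.val < k)
      (fun σ : Equiv.Perm (Fin n) => ∀ i : Fin n, (i.val = 0 ∨ k ≤ i.val) → σ i = i)
      (fun σ => ⟨fun h i hi => h i (by omega), fun h i hi => h i (by omega)⟩)
    rw [card_val_mid n k (by omega)] at h
    exact h
  have hHpart := Finset.card_filter_add_card_filter_not
    (s := univ.filter fun σ : Equiv.Perm (Fin n) => ∀ i : Fin n, k ≤ i.val → σ i = i)
    (p := fun σ => ∀ i : Fin n, i.val = 0 → σ i ≠ i)
  have hHf1 : (univ.filter fun σ : Equiv.Perm (Fin n) =>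
        ∀ i : Fin n, k ≤ i.val → σ i = i).filter
      (fun σ => ∀ i : Fin n, i.val = 0 → σ i ≠ i) = Hfam n k := by
    ext σ
    rw [Hfam]
    simp only [mem_filter, mem_univ, true_and]
    tauto
  have hHf2 : (univ.filter fun σ : Equiv.Perm (Fin n) =>
        ∀ i : Fin n, k ≤ i.val → σ i = i).filter
      (fun σ => ¬ ∀ i : Fin n, i.val = 0 → σ i ≠ i)
      = univ.filter fun σ : Equiv.Perm (Fin n) =>
          ∀ i : Fin n, (i.val = 0 ∨ k ≤ i.val) → σ i = i := by
    ext σ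
    simp only [mem_filter, mem_univ, true_and]
    constructor
    · rintro ⟨h2, hnp⟩ i hi
      push_neg at hnp
      obtain ⟨j, hj0, hjfix⟩ := hnp
      rcases hi with hi | hi
      · rw [show i = j from Fin.ext (hi.trans hj0.symm)]
        exact hjfix
      · exact h2 i hi
    · intro h
      refine ⟨fun i hi => h i (Or.inr hi), ?_⟩
      push_neg
      exact ⟨⟨0, by omega⟩, rfl, h _ (Or.inl rfl)⟩
  rw [hHf1, hHf2, hA0, hA] at hHpart
  -- counting N
  have hA1 : (univ.filter fun π : Equiv.Perm (Fin n) =>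
      ∀ i : Fin n, i.val = 0 → π i = i).card = (n - 1).factorial := by
    have h := card_perm_fixing2 (fun i : Fin n => 0 < i.val)
      (fun σ : Equiv.Perm (Fin n) => ∀ i : Fin n, i.val = 0 → σ i = i)
      (fun σ => ⟨fun h i hi => h i (by omega), fun h i hi => h i (by omega)⟩)
    rw [card_val_pos n] at h
    exact h
  have hNpart := Finset.card_filter_add_card_filter_not
    (s := univ.filter fun π : Equiv.Perm (Fin n) => ∀ i : Fin n, i.val = 0 → π i = i)
    (p := fun π => ∀ i : Fin n, k ≤ i.val → π i ≠ i)
  have hNf2 : (univ.filter fun π : Equiv.Perm (Fin n) =>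
        ∀ i : Fin n, i.val = 0 → π i = i).filter
      (fun π => ¬ ∀ i : Fin n, k ≤ i.val → π i ≠ i) = Nfam n k := by
    ext π
    rw [Nfam]
    simp only [mem_filter, mem_univ, true_and]
    constructor
    · rintro ⟨h1, hnp⟩
      push_neg at hnp
      obtain ⟨j, hjk, hjfix⟩ := hnp
      refine ⟨h1, fun σ hσ => ⟨j, ?_⟩⟩
      rw [Hfam, mem_filter] at hσ
      rw [hjfix, hσ.2.2 j hjk]
    · rintro ⟨h1, hint⟩
      refine ⟨h1, fun hpB => ?_⟩
      obtain ⟨σ, hσH, hσne⟩ := exists_avoiding n k hk2 hn π h1 hpB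
      obtain ⟨i, hi⟩ := hint σ hσH
      exact hσne i hi
  -- counting B
  have hBcard : ((univ.filter fun π : Equiv.Perm (Fin n) =>
        ∀ i : Fin n, i.val = 0 → π i = i).filter
      (fun π => ∀ i : Fin n, k ≤ i.val → π i ≠ i)).card
      = ∑ i ∈ Finset.range k, (k - 1).choose i * numDerangements (n - 1 - i) := by
    rw [Finset.filter_filter]
    have pres : ∀ π : Equiv.Perm (Fin n), (∀ i : Fin n, i.val = 0 → π i = i) →
        ∀ x : Fin n, 0 < x.val ↔ 0 < (π x).val := by
      intro π h1 x
      have hz : π ⟨0, by omega⟩ = ⟨0, by omega⟩ := h1 _ rfl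
      constructor
      · intro hx
        by_contra h
        have hx0 : π x = (⟨0, by omega⟩ : Fin n) := by
          apply Fin.ext
          show (π x).val = 0
          omega
        have := π.injective (hx0.trans hz.symm)
        rw [this] at hx
        simp at hx
      · intro hx
        by_contra h
        have hx0 : x = (⟨0, by omega⟩ : Fin n) := by
          apply Fin.ext
          show x.val = 0
          omega
        rw [hx0, hz] at hx
        simp at hx
    have hbij : (univ.filter fun π : Equiv.Perm (Fin n) =>
          (∀ i : Fin n, i.val = 0 → π i = i) ∧ ∀ i : Fin n, k ≤ i.val → π i ≠ i).card
        = (univ.filter fun π' : Equiv.Perm {x : Fin n // 0 < x.val} =>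
            ∀ a : {x : Fin n // 0 < x.val}, k ≤ (a : Fin n).val → π' a ≠ a).card := by
      refine Finset.card_bij'
        (fun π hπ => π.subtypePerm (fun x => (pres π (Finset.mem_filter.mp hπ).2.1 x).symm))
        (fun π' _ => Equiv.Perm.ofSubtype π') ?_ ?_ ?_ ?_
      · intro π hπ
        rw [Finset.mem_filter] at hπ ⊢
        refine ⟨Finset.mem_univ _, fun a hak heq => ?_⟩
        have : π (a : Fin n) = (a : Fin n) := congrArg Subtype.val heq
        exact hπ.2.2 (a : Fin n) hak this
      · intro π' hπ'
        rw [Finset.mem_filter] at hπ' ⊢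
        refine ⟨Finset.mem_univ _, fun i hi => ?_, fun i hik heq => ?_⟩
        · exact Equiv.Perm.ofSubtype_apply_of_not_mem π' (by omega)
        · have hi0 : 0 < i.val := by omega
          rw [Equiv.Perm.ofSubtype_apply_of_mem π' hi0] at heq
          exact hπ'.2 ⟨i, hi0⟩ hik (Subtype.ext heq)
      · intro π hπ
        rw [Finset.mem_filter] at hπ
        exact Equiv.Perm.ofSubtype_subtypePerm _ (fun x hx => by
          by_contra h0
          exact hx (hπ.2.1 x (by omega)))
      · intro π' hπ'
        exact Equiv.Perm.subtypePerm_ofSubtype π'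
    rw [hbij]
    have h2 := card_perm_avoiding2
      (fun a : {x : Fin n // 0 < x.val} => k ≤ (a : Fin n).val)
      (fun π' : Equiv.Perm {x : Fin n // 0 < x.val} =>
        ∀ a : {x : Fin n // 0 < x.val}, k ≤ (a : Fin n).val → π' a ≠ a)
      (fun _ => Iff.rfl)
    rw [card_val_pos_lt n k (by omega), card_val_pos n,
      show k - 1 + 1 = k from by omega] at h2
    exact h2
  -- final assembly
  rw [hNf2, hBcard, hA1] at hNpart
  have hZ1 : ((Hfam n k).card : ℤ) + ((k - 1).factorial : ℤ) = (k.factorial : ℤ) := by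
    exact_mod_cast congrArg (Nat.cast : ℕ → ℤ) hHpart
  have hZ2 : (∑ i ∈ Finset.range k, ((k - 1).choose i : ℤ) * (numDerangements (n - 1 - i) : ℤ))
      + ((Nfam n k).card : ℤ) = ((n - 1).factorial : ℤ) := by
    have := congrArg (Nat.cast : ℕ → ℤ) hNpart
    push_cast at this
    exact this
  rw [hEcard]
  push_cast
  linarith
end

section
/- For all integers n and k with 2 ≤ k ≤ n−2, the cardinality of N(H_k) equals the alternating sum ∑_{i=1}^{n−k} (−1)^{i+1}·C(n−k,i)·(n−1−i)!. -/
section AuxLemmas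

open Finset Equiv

/-- Number of permutations of `Fin n` fixing every element of `s` is `(n - #s)!`. -/
lemma card_fixing (n : ℕ) (s : Finset (Fin n)) :
    #(univ.filter fun π : Perm (Fin n) => ∀ i ∈ s, π i = i) = (n - #s).factorial := by
  classical
  have h1 : #(univ.filter fun π : Perm (Fin n) => ∀ i ∈ s, π i = i)
      = Fintype.card {π : Perm (Fin n) // ∀ i ∈ s, π i = i} := (Fintype.card_subtype _).symm
  rw [h1]
  have e1 : {π : Perm (Fin n) // ∀ i ∈ s, π i = i}
      ≃ Perm {a : Fin n // a ∉ s} := by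
    refine (Equiv.subtypeEquivRight ?_).trans
      (Equiv.Perm.subtypeEquivSubtypePerm (fun a : Fin n => a ∉ s)).symm
    intro π
    constructor
    · intro h a ha; exact h a (not_not.mp ha)
    · intro h a ha; exact h a (not_not.mpr ha)
  rw [Fintype.card_congr e1, Fintype.card_perm]
  congr 1
  rw [Fintype.card_subtype]
  have : (univ.filter fun a : Fin n => a ∉ s) = univ \ s := by
    ext a; simp
  rw [this, card_sdiff_of_subset (subset_univ s), card_univ, Fintype.card_fin]


lemma exists_avoider {n k : ℕ} (hk2 : 2 ≤ k) (hkn : k + 2 ≤ n) (π : Equiv.Perm (Fin n))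
    (h0 : ∀ j : Fin n, j.val = 0 → π j = j)
    (hnofix : ∀ i : Fin n, k ≤ i.val → π i ≠ i) :
    ∃ σ : Equiv.Perm (Fin n),
      ((∀ i : Fin n, i.val = 0 → σ i ≠ i) ∧ ∀ i : Fin n, k ≤ i.val → σ i = i)
      ∧ ∀ i : Fin n, π i ≠ σ i := by
  classical
  haveI : NeZero k := ⟨by omega⟩
  have hkn' : k ≤ n := by omega
  let e : Fin k ≃ {x : Fin n // x.val < k} :=
    { toFun := fun i => ⟨⟨i.val, lt_of_lt_of_le i.2 hkn'⟩, i.2⟩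
      invFun := fun x => ⟨x.1.val, x.2⟩
      left_inv := fun i => rfl
      right_inv := fun x => rfl }
  have heval : ∀ i : Fin k, ((e i : Fin n)).val = i.val := fun i => rfl
  set P : Fin k → Prop := fun i => (π (e i)).val < k with hP
  set pmap : {i : Fin k // P i} → Fin k := fun x => ⟨(π (e x.1)).val, x.2⟩ with hpmap
  have pinj : Function.Injective pmap := by
    rintro ⟨a, ha⟩ ⟨b, hb⟩ hab
    simp only [hpmap, Fin.mk.injEq] at hab
    have h1 : π (e a) = π (e b) := Fin.ext hab
    have h2 : (e a : Fin n) = e b := Subtype.ext_iff.mp (e.injective.eq_iff.mpr rfl) ▸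
      congrArg Subtype.val (Subtype.ext (π.injective h1) : (e a) = (e b))
    have h3 : (a : ℕ) = b := by
      have := congrArg Fin.val h2
      rwa [heval a, heval b] at this
    exact Subtype.ext (Fin.ext h3)
  have hcard : Fintype.card {i : Fin k // ¬ P i}
      = Fintype.card {v : Fin k // v ∉ Set.range pmap} := by
    have h1 : Fintype.card {i : Fin k // ¬ P i} = k - Fintype.card {i : Fin k // P i} := by
      rw [Fintype.card_subtype_compl, Fintype.card_fin]
    have h2 : Fintype.card {v : Fin k // v ∉ Set.range pmap}
        = k - Fintype.card {v : Fin k // v ∈ Set.range pmap} := by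
      rw [Fintype.card_subtype_compl, Fintype.card_fin]
    have h3 : Fintype.card {v : Fin k // v ∈ Set.range pmap}
        = Fintype.card {i : Fin k // P i} :=
      (Fintype.card_congr (Equiv.ofInjective pmap pinj)).symm
    rw [h1, h2, h3]
  let g : {i : Fin k // ¬ P i} ≃ {v : Fin k // v ∉ Set.range pmap} :=
    Fintype.equivOfCardEq hcard
  let f0 : Fin k → Fin k := fun i => if h : P i then pmap ⟨i, h⟩ else (g ⟨i, h⟩ : Fin k)
  have hf0pos : ∀ (i : Fin k) (h : P i), f0 i = pmap ⟨i, h⟩ := fun i h => dif_pos h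
  have finj : Function.Injective f0 := by
    intro a b hab
    by_cases ha : P a <;> by_cases hb : P b <;>
      simp only [f0, dif_pos, dif_neg, ha, hb, not_false_iff] at hab
    · exact congrArg Subtype.val (pinj hab)
    · have hmem : pmap ⟨a, ha⟩ ∈ Set.range pmap := ⟨⟨a, ha⟩, rfl⟩
      rw [hab] at hmem
      exact absurd hmem (g ⟨b, hb⟩).2
    · have hmem : pmap ⟨b, hb⟩ ∈ Set.range pmap := ⟨⟨b, hb⟩, rfl⟩
      rw [← hab] at hmem
      exact absurd hmem (g ⟨a, ha⟩).2
    · exact congrArg Subtype.val (g.injective (Subtype.ext hab))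
  let q : Equiv.Perm (Fin k) := Equiv.ofBijective f0 (Finite.injective_iff_bijective.mp finj)
  let τ : Equiv.Perm (Fin k) := q.trans (Equiv.addLeft (1 : Fin k))
  have hτ : ∀ i : Fin k, (τ i).val = (1 + (f0 i).val) % k := by
    intro i
    have : τ i = 1 + f0 i := rfl
    rw [this, Fin.val_add, Fin.val_one' k, Nat.mod_eq_of_lt (by omega : 1 < k)]
  let σ : Equiv.Perm (Fin n) := τ.extendDomain e
  have hσlt : ∀ (x : Fin n) (hx : x.val < k), σ x = e (τ (e.symm ⟨x, hx⟩)) := by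
    intro x hx
    exact Equiv.Perm.extendDomain_apply_subtype τ e hx
  have hσval : ∀ (x : Fin n) (hx : x.val < k), (σ x).val = (τ (e.symm ⟨x, hx⟩)).val := by
    intro x hx
    rw [hσlt x hx]
    exact heval _
  have hσge : ∀ x : Fin n, k ≤ x.val → σ x = x := by
    intro x hx
    exact Equiv.Perm.extendDomain_apply_not_subtype τ e (by omega)
  have hesymmval : ∀ (x : Fin n) (hx : x.val < k), ((e.symm ⟨x, hx⟩ : Fin k)).val = x.val :=
    fun x hx => rfl
  have hpival : ∀ (x : Fin n) (hx : x.val < k) (hpx : (π x).val < k),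
      (f0 (e.symm ⟨x, hx⟩)).val = (π x).val := by
    intro x hx hpx
    have hev : (e (e.symm ⟨x, hx⟩) : Fin n) = x :=
      congrArg Subtype.val (e.apply_symm_apply ⟨x, hx⟩)
    have hPz : P (e.symm ⟨x, hx⟩) := by rw [hP]; simp only [hev]; exact hpx
    rw [hf0pos _ hPz]
    show (π (e (e.symm ⟨x, hx⟩) : Fin n)).val = (π x).val
    rw [hev]
  refine ⟨σ, ⟨⟨?_, hσge⟩, ?_⟩⟩
  · intro i hi hcontra
    have hik : i.val < k := by omega
    have h1 : (σ i).val = i.val := congrArg Fin.val hcontra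
    rw [hσval i hik, hτ, hpival i hik (by rw [h0 i hi]; omega)] at h1
    rw [h0 i hi, hi] at h1
    rw [Nat.mod_eq_of_lt (by omega : 1 + 0 < k)] at h1
    omega
  · intro i hcontra
    by_cases hik : i.val < k
    · have h1 : (π i).val = (σ i).val := congrArg Fin.val hcontra
      by_cases hπ : (π i).val < k
      · rw [hσval i hik, hτ, hpival i hik hπ] at h1
        set a := (π i).val with ha
        have halt : a < k := hπ
        by_cases hcase : 1 + a < k
        · rw [Nat.mod_eq_of_lt hcase] at h1; omega
        · have hka : 1 + a = k := by omega
          rw [hka, Nat.mod_self] at h1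
          omega
      · have : (σ i).val < k := by
          rw [hσval i hik]; exact (τ _).2
        omega
    · push_neg at hik
      exact hnofix i hik (hcontra.trans (hσge i hik))

end AuxLemmas

open Finset Equiv in
theorem card_Nfam_alternating (n k : ℕ) (hk2 : 2 ≤ k) (hkn : k ≤ n - 2) :
    ((Nfam n k).card : ℤ) =
      ∑ i ∈ Finset.Icc 1 (n - k),
        (-1 : ℤ) ^ (i + 1) * (Nat.choose (n - k) i : ℤ) * (Nat.factorial (n - 1 - i) : ℤ) := by
  classical
  have hn : k + 2 ≤ n := by omega
  haveI : NeZero n := ⟨by omega⟩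
  set T : Finset (Fin n) := univ.filter (fun i : Fin n => k ≤ i.val) with hT
  set S : Fin n → Finset (Equiv.Perm (Fin n)) := fun i =>
    univ.filter (fun π : Equiv.Perm (Fin n) =>
      (∀ j : Fin n, j.val = 0 → π j = j) ∧ π i = i) with hS
  -- Step A: characterization
  have hchar : Nfam n k = T.biUnion S := by
    ext π
    simp only [Nfam, mem_filter, mem_univ, true_and, mem_biUnion, hT, hS]
    constructor
    · rintro ⟨hz, hint⟩
      by_contra hcon
      have hnofix : ∀ i : Fin n, k ≤ i.val → π i ≠ i := fun i hi hfix =>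
        hcon ⟨i, hi, hz, hfix⟩
      obtain ⟨σ, hσH, hσav⟩ := exists_avoider hk2 hn π hz hnofix
      obtain ⟨i, hi⟩ := hint σ (mem_filter.mpr ⟨mem_univ σ, hσH⟩)
      exact hσav i hi
    · rintro ⟨i, hiT, hz2, hfix⟩
      refine ⟨hz2, fun σ hσ => ?_⟩
      rw [Hfam, mem_filter] at hσ
      exact ⟨i, by rw [hfix, hσ.2.2 i hiT]⟩
  -- #T = n - k
  have hTcard : #T = n - k := by
    have : T = Finset.map ⟨fun j : Fin (n - k) => (⟨k + j.val, by omega⟩ : Fin n),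
        fun ⦃a b⦄ hab => by
          have := congrArg Fin.val hab
          simp only at this
          exact Fin.ext (by omega)⟩ univ := by
      ext x
      simp only [hT, mem_filter, mem_univ, true_and, mem_map, Function.Embedding.coeFn_mk]
      constructor
      · intro hx
        exact ⟨⟨x.val - k, by omega⟩, Fin.ext (by show k + (x.val - k) = x.val; omega)⟩
      · rintro ⟨j, rfl⟩
        show k ≤ k + j.val; omega
    rw [this, card_map, card_univ, Fintype.card_fin]
  -- cardinality of intersections
  have hinf : ∀ (t : Finset (Fin n)) (ht : t.Nonempty), t ⊆ T →
      #(t.inf' ht S) = (n - 1 - #t).factorial := by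
    intro t ht hsub
    have hzt : (0 : Fin n) ∉ t := by
      intro h
      have := (mem_filter.mp (hsub h)).2
      simp at this
      omega
    have heq : t.inf' ht S = univ.filter
        (fun π : Equiv.Perm (Fin n) => ∀ i ∈ insert (0 : Fin n) t, π i = i) := by
      ext π
      rw [mem_inf']
      simp only [hS, mem_filter, mem_univ, true_and, mem_insert, forall_eq_or_imp]
      constructor
      · intro h
        obtain ⟨w, hw⟩ := ht
        exact ⟨(h w hw).1 0 rfl, fun i hi => (h i hi).2⟩
      · intro h i hi
        refine ⟨fun j hj => ?_, h.2 i hi⟩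
        have : j = 0 := Fin.ext (by simpa using hj)
        rw [this]; exact h.1
    rw [heq, card_fixing, card_insert_of_notMem hzt]
    congr 1
    omega
  -- inclusion–exclusion
  rw [hchar]
  rw [Finset.inclusion_exclusion_card_biUnion T S]
  set G : ℕ → ℤ := fun j => (-1 : ℤ) ^ (j + 1) * ((n - 1 - j).factorial : ℤ) with hG
  have step1 : ∑ t : {x // x ∈ T.powerset.filter (·.Nonempty)},
      (-1 : ℤ) ^ (#t.1 + 1) * #(t.1.inf' (mem_filter.1 t.2).2 S)
      = ∑ t ∈ T.powerset.filter (·.Nonempty), G #t := by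
    rw [← Finset.sum_attach (T.powerset.filter (·.Nonempty)) (fun t => G #t)]
    rw [← Finset.univ_eq_attach]
    refine Finset.sum_congr rfl fun t _ => ?_
    have hmem := mem_filter.1 t.2
    have hsub := mem_powerset.1 hmem.1
    rw [hinf t.1 hmem.2 hsub, hG]
  rw [step1]
  have hfilterno : T.powerset.filter (fun t => ¬ t.Nonempty) = {∅} := by
    ext t
    simp [Finset.not_nonempty_iff_eq_empty]
    rintro rfl
    exact empty_subset T
  have split : ∑ t ∈ T.powerset.filter (·.Nonempty), G #t
      = (∑ t ∈ T.powerset, G #t) - G 0 := by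
    rw [← Finset.sum_filter_add_sum_filter_not T.powerset (·.Nonempty) (fun t => G #t)]
    rw [hfilterno, Finset.sum_singleton, Finset.card_empty]
    ring
  rw [split, Finset.sum_powerset_apply_card G, hTcard]
  have hrange : Finset.range ((n - k) + 1) = insert 0 (Finset.Icc 1 (n - k)) := by
    ext x
    simp only [Finset.mem_range, Finset.mem_insert, Finset.mem_Icc]
    omega
  rw [hrange, Finset.sum_insert (by simp), Nat.choose_zero_right, one_smul]
  rw [add_sub_cancel_left]
  refine Finset.sum_congr rfl fun m _ => ?_
  rw [hG, nsmul_eq_mul]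
  push_cast
  ring
end

section
/- For all integers n and k with 2 ≤ k ≤ n−2, a permutation π ∈ Σ_n with π(1)=1 intersects every member of H_k if and only if π has a fixed point in [k+1,n], i.e., π(i)=i for some i with k+1 ≤ i ≤ n. -/
/-- `N(H_k)`: permutations `π` with `π(1) = 1` intersecting every member of `H_k`. -/

theorem intersects_Hfam_iff_fixed_point (n k : ℕ) (hk2 : 2 ≤ k) (hkn : k ≤ n - 2)
    (π : Equiv.Perm (Fin n)) (hπ : ∀ i : Fin n, i.val = 0 → π i = i) :
    (∀ σ ∈ Hfam n k, ∃ i, π i = σ i) ↔ ∃ i : Fin n, k ≤ i.val ∧ π i = i := by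
  classical
  have hn4 : 4 ≤ n := by omega
  have hkn' : k ≤ n := by omega
  have hk0 : 0 < k := by omega
  constructor
  · intro h
    by_contra hno
    push_neg at hno
    -- hno : ∀ i, k ≤ i.val → π i ≠ i
    set S : Finset (Fin n) := Finset.univ.filter (fun i => i.val < k) with hSdef
    set D : Finset (Fin n) := Finset.univ.filter
      (fun i => i.val < k ∧ (π i).val < k) with hDdef
    have hDS : D ⊆ S := by
      intro x hx
      simp only [hDdef, Finset.mem_filter, Finset.mem_univ, true_and] at hx
      simp only [hSdef, Finset.mem_filter, Finset.mem_univ, true_and]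
      exact hx.1
    set R : Finset (Fin n) := D.image π with hRdef
    have hRS : R ⊆ S := by
      intro x hx
      simp only [hRdef, Finset.mem_image] at hx
      obtain ⟨a, ha, rfl⟩ := hx
      simp only [hDdef, Finset.mem_filter, Finset.mem_univ, true_and] at ha
      simp only [hSdef, Finset.mem_filter, Finset.mem_univ, true_and]
      exact ha.2
    have hcard : (S \ D).card = (S \ R).card := by
      rw [Finset.card_sdiff_of_subset hDS, Finset.card_sdiff_of_subset hRS,
        Finset.card_image_of_injective _ π.injective]
    let e : (S \ D : Finset (Fin n)) ≃ (S \ R : Finset (Fin n)) :=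
      Finset.equivOfCardEq hcard
    obtain ⟨g, g_D, g_fixe, g_lt, g_inj⟩ :
        ∃ g : Fin n → Fin n, (∀ x, x ∈ D → g x = π x) ∧
          (∀ x : Fin n, k ≤ x.val → g x = x) ∧
          (∀ x : Fin n, x.val < k → (g x).val < k) ∧ Function.Injective g := by
      refine ⟨fun x => if hx : x ∈ D then π x else
        if hx2 : x ∈ S \ D then (e ⟨x, hx2⟩ : Fin n) else x, ?_, ?_, ?_, ?_⟩
      · intro x hx
        simp only [dif_pos hx]
      · intro x hx
        have hxD : x ∉ D := by
          intro hc
          have := hDS hc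
          simp only [hSdef, Finset.mem_filter, Finset.mem_univ, true_and] at this
          omega
        have hxS : x ∉ S \ D := by
          intro hc
          have := (Finset.mem_sdiff.mp hc).1
          simp only [hSdef, Finset.mem_filter, Finset.mem_univ, true_and] at this
          omega
        simp only [dif_neg hxD, dif_neg hxS]
      · intro x hx
        by_cases hxD : x ∈ D
        · simp only [dif_pos hxD]
          simp only [hDdef, Finset.mem_filter, Finset.mem_univ, true_and] at hxD
          exact hxD.2
        · have hxS : x ∈ S \ D := by
            refine Finset.mem_sdiff.mpr ⟨?_, hxD⟩
            simp only [hSdef, Finset.mem_filter, Finset.mem_univ, true_and]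
            exact hx
          simp only [dif_neg hxD, dif_pos hxS]
          have h2 := (e ⟨x, hxS⟩).2
          have h3 := hRS -- not directly
          have h4 : ((e ⟨x, hxS⟩ : Fin n)) ∈ S := (Finset.mem_sdiff.mp h2).1
          simp only [hSdef, Finset.mem_filter, Finset.mem_univ, true_and] at h4
          exact h4
      · intro a b hab
        have memS : ∀ x : Fin n, x ∈ S ↔ x.val < k := by
          intro x
          simp only [hSdef, Finset.mem_filter, Finset.mem_univ, true_and]
        by_cases haD : a ∈ D <;> by_cases hbD : b ∈ D
        · simp only [dif_pos haD, dif_pos hbD] at hab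
          exact π.injective hab
        · by_cases hbS : b ∈ S \ D
          · simp only [dif_pos haD, dif_neg hbD, dif_pos hbS] at hab
            have h1 : π a ∈ R := Finset.mem_image_of_mem π haD
            have h2 := (e ⟨b, hbS⟩).2
            rw [← hab] at h2
            exact absurd h1 (Finset.mem_sdiff.mp h2).2
          · simp only [dif_pos haD, dif_neg hbD, dif_neg hbS] at hab
            exfalso
            have h1 : π a ∈ S := hRS (Finset.mem_image_of_mem π haD)
            rw [hab] at h1
            exact hbS (Finset.mem_sdiff.mpr ⟨h1, hbD⟩)
        · by_cases haS : a ∈ S \ D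
          · simp only [dif_neg haD, dif_pos haS, dif_pos hbD] at hab
            have h1 : π b ∈ R := Finset.mem_image_of_mem π hbD
            have h2 := (e ⟨a, haS⟩).2
            rw [hab] at h2
            exact absurd h1 (Finset.mem_sdiff.mp h2).2
          · simp only [dif_neg haD, dif_neg haS, dif_pos hbD] at hab
            exfalso
            have h1 : π b ∈ S := hRS (Finset.mem_image_of_mem π hbD)
            rw [← hab] at h1
            exact haS (Finset.mem_sdiff.mpr ⟨h1, haD⟩)
        · by_cases haS : a ∈ S \ D <;> by_cases hbS : b ∈ S \ D
          · simp only [dif_neg haD, dif_pos haS, dif_neg hbD, dif_pos hbS] at hab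
            have := e.injective (Subtype.coe_injective hab)
            exact congrArg Subtype.val this
          · simp only [dif_neg haD, dif_pos haS, dif_neg hbD, dif_neg hbS] at hab
            exfalso
            have h2 := (e ⟨a, haS⟩).2
            have h4 : ((e ⟨a, haS⟩ : Fin n)) ∈ S := (Finset.mem_sdiff.mp h2).1
            rw [hab] at h4
            exact hbS (Finset.mem_sdiff.mpr ⟨h4, hbD⟩)
          · simp only [dif_neg haD, dif_neg haS, dif_neg hbD, dif_pos hbS] at hab
            exfalso
            have h2 := (e ⟨b, hbS⟩).2
            have h4 : ((e ⟨b, hbS⟩ : Fin n)) ∈ S := (Finset.mem_sdiff.mp h2).1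
            rw [← hab] at h4
            exact haS (Finset.mem_sdiff.mpr ⟨h4, haD⟩)
          · simp only [dif_neg haD, dif_neg haS, dif_neg hbD, dif_neg hbS] at hab
            exact hab
    have mod_succ : ∀ m : ℕ, m < k → (m + 1) % k = if m + 1 = k then 0 else m + 1 := by
      intro m hm
      split_ifs with hc
      · rw [hc, Nat.mod_self]
      · exact Nat.mod_eq_of_lt (by omega)
    obtain ⟨c, c_fix, c_lt, c_ne, c_inj⟩ :
        ∃ c : Fin n → Fin n, (∀ x : Fin n, k ≤ x.val → c x = x) ∧
          (∀ x : Fin n, x.val < k → (c x).val < k) ∧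
          (∀ x : Fin n, x.val < k → c x ≠ x) ∧ Function.Injective c := by
      refine ⟨fun x => if hx : x.val < k then
        ⟨(x.val + 1) % k, lt_of_lt_of_le (Nat.mod_lt _ hk0) hkn'⟩ else x, ?_, ?_, ?_, ?_⟩
      · intro x hx
        simp only [dif_neg (by omega : ¬ x.val < k)]
      · intro x hx
        simp only [dif_pos hx]
        exact Nat.mod_lt _ hk0
      · intro x hx heq
        simp only [dif_pos hx] at heq
        have := congrArg Fin.val heq
        simp only at this
        have h2 := mod_succ x.val hx
        split_ifs at h2 <;> omega
      · intro a b hab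
        by_cases ha : a.val < k <;> by_cases hb : b.val < k
        · simp only [dif_pos ha, dif_pos hb] at hab
          have := congrArg Fin.val hab
          simp only at this
          have h1 := mod_succ a.val ha
          have h2 := mod_succ b.val hb
          apply Fin.ext
          split_ifs at h1 h2 <;> omega
        · simp only [dif_pos ha, dif_neg hb] at hab
          have := congrArg Fin.val hab
          simp only at this
          have h1 : (a.val + 1) % k < k := Nat.mod_lt _ hk0
          omega
        · simp only [dif_neg ha, dif_pos hb] at hab
          have := congrArg Fin.val hab
          simp only at this
          have h1 : (b.val + 1) % k < k := Nat.mod_lt _ hk0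
          omega
        · simp only [dif_neg ha, dif_neg hb] at hab
          exact hab
    have hbij : Function.Bijective (c ∘ g) :=
      (Finite.injective_iff_bijective).mp (c_inj.comp g_inj)
    obtain ⟨σ, σ_apply⟩ : ∃ σ : Equiv.Perm (Fin n), ∀ x, σ x = c (g x) :=
      ⟨Equiv.ofBijective _ hbij, fun _ => rfl⟩
    have hσmem : σ ∈ Hfam n k := by
      simp only [Hfam, Finset.mem_filter, Finset.mem_univ, true_and]
      constructor
      · intro i hi heq
        have hiD : i ∈ D := by
          simp only [hDdef, Finset.mem_filter, Finset.mem_univ, true_and]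
          rw [hπ i hi]
          omega
        have h1 : σ i = c i := by rw [σ_apply, g_D i hiD, hπ i hi]
        rw [h1] at heq
        exact c_ne i (by omega) heq
      · intro i hi
        rw [σ_apply, g_fixe i hi, c_fix i hi]
    obtain ⟨i, hi⟩ := h σ hσmem
    by_cases hik : k ≤ i.val
    · have h1 : σ i = i := by rw [σ_apply, g_fixe i hik, c_fix i hik]
      exact hno i hik (hi.trans h1)
    · push_neg at hik
      by_cases hpi : (π i).val < k
      · have hiD : i ∈ D := by
          simp only [hDdef, Finset.mem_filter, Finset.mem_univ, true_and]
          exact ⟨hik, hpi⟩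
        have h1 : σ i = c (π i) := by rw [σ_apply, g_D i hiD]
        rw [h1] at hi
        exact c_ne (π i) hpi hi.symm
      · have h1 : (σ i).val < k := by
          rw [σ_apply]
          exact c_lt _ (g_lt i hik)
        rw [← hi] at h1
        omega
  · rintro ⟨i, hki, hfix⟩ σ hσ
    simp only [Hfam, Finset.mem_filter, Finset.mem_univ, true_and] at hσ
    exact ⟨i, by rw [hfix, hσ.2 i hki]⟩
end

section
/- For every integer n ≥ 1, if F ⊆ Σ_n is an intersecting family of permutations, then |F| ≤ (n−1)!. -/
theorem deza_frankl_bound (n : ℕ) (hn : 1 ≤ n)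
    (F : Finset (Equiv.Perm (Fin n)))
    (hF : ∀ σ ∈ F, ∀ τ ∈ F, ∃ i, σ i = τ i) :
    F.card ≤ Nat.factorial (n - 1) := by
  cases n with
  | zero => omega
  | succ m =>
    simp only [Nat.add_sub_cancel]
    -- f σ : x ↦ σ x - σ 0, a permutation fixing 0
    set f : Equiv.Perm (Fin (m + 1)) → Equiv.Perm (Fin (m + 1)) :=
      fun σ => σ.trans (Equiv.subRight (σ 0)) with hf
    have hf0 : ∀ σ, f σ 0 = 0 := by
      intro σ
      simp [hf, Equiv.subRight]
    have hfapp : ∀ σ x, f σ x = σ x - σ 0 := by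
      intro σ x; simp [hf, Equiv.subRight]
    set g : Equiv.Perm (Fin (m + 1)) → Equiv.Perm (Fin m) :=
      fun σ => (Equiv.Perm.decomposeFin (f σ)).2 with hg
    have hinj : Set.InjOn g F := by
      intro σ hσ τ hτ hgeq
      -- first component of decomposeFin is value at 0
      have hfst : ∀ ρ : Equiv.Perm (Fin (m + 1)),
          (Equiv.Perm.decomposeFin ρ).1 = ρ 0 := by
        intro ρ
        conv_rhs => rw [← Equiv.Perm.decomposeFin.symm_apply_apply ρ]
        rw [← Equiv.Perm.decomposeFin_symm_apply_zero
          (Equiv.Perm.decomposeFin ρ).1 (Equiv.Perm.decomposeFin ρ).2]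
      have hdec : Equiv.Perm.decomposeFin (f σ) = Equiv.Perm.decomposeFin (f τ) := by
        ext1
        · rw [hfst, hfst, hf0, hf0]
        · exact hgeq
      have hfeq : f σ = f τ := Equiv.Perm.decomposeFin.injective hdec
      obtain ⟨i, hi⟩ := hF σ hσ τ hτ
      have h0 : σ 0 = τ 0 := by
        have := congrArg (fun ρ : Equiv.Perm (Fin (m + 1)) => ρ i) hfeq
        simp only [hfapp] at this
        rw [hi] at this
        exact sub_right_injective this
      apply Equiv.ext
      intro x
      have := congrArg (fun ρ : Equiv.Perm (Fin (m + 1)) => ρ x) hfeq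
      simp only [hfapp, h0] at this
      exact sub_left_inj.mp this
    calc F.card ≤ (Finset.univ : Finset (Equiv.Perm (Fin m))).card :=
          Finset.card_le_card_of_injOn g (fun _ _ => Finset.mem_univ _) hinj
      _ = Nat.factorial m := by
          rw [Finset.card_univ, Fintype.card_perm, Fintype.card_fin]
end

section
/- Let G be a nonempty finite family of finite sets, let s ≥ 1 be an integer, and suppose every member of G has cardinality at most s and the intersection of all members of G is empty. Then: (a) there is no hitting set of G of cardinality 1; (b) for every integer i ≥ 2, the number of inclusion-minimal hitting sets of G of cardinality i is at most s^i. -/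
/-- `H` is a hitting set of the family `G`: it meets every member of `G`. -/
def IsHittingSet {α : Type*} [DecidableEq α] (G : Finset (Finset α)) (H : Finset α) : Prop :=
  ∀ A ∈ G, (H ∩ A).Nonempty

instance {α : Type*} [DecidableEq α] (G : Finset (Finset α)) :
    DecidablePred (IsHittingSet G) := fun _ => by unfold IsHittingSet; infer_instance

lemma aux_count {α : Type*} [Fintype α] [DecidableEq α] (s : ℕ) :
    ∀ (j : ℕ) (G : Finset (Finset α)), (∀ A ∈ G, A.card ≤ s) →
      (Finset.univ.filter fun H : Finset α =>
          H.card = j ∧ IsHittingSet G H ∧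
          ∀ H' ⊂ H, ¬ IsHittingSet G H').card ≤ s ^ j := by
  intro j
  induction j with
  | zero =>
    intro G hcard
    have hsub : (Finset.univ.filter fun H : Finset α =>
        H.card = 0 ∧ IsHittingSet G H ∧ ∀ H' ⊂ H, ¬ IsHittingSet G H') ⊆ {∅} := by
      intro H hH
      simp only [Finset.mem_filter] at hH
      simp [Finset.card_eq_zero.mp hH.2.1]
    calc _ ≤ ({∅} : Finset (Finset α)).card := Finset.card_le_card hsub
      _ = 1 := Finset.card_singleton _
      _ = s ^ 0 := (pow_zero s).symm
  | succ j ih =>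
    intro G hcard
    rcases G.eq_empty_or_nonempty with rfl | ⟨A₀, hA₀⟩
    · have : (Finset.univ.filter fun H : Finset α =>
          H.card = j + 1 ∧ IsHittingSet ∅ H ∧ ∀ H' ⊂ H, ¬ IsHittingSet ∅ H') = ∅ := by
        apply Finset.filter_false_of_mem
        intro H _ hH
        have hne : H ≠ ∅ := by
          intro h; rw [h] at hH; simp at hH
        exact hH.2.2 ∅ (Finset.empty_ssubset.mpr (Finset.nonempty_iff_ne_empty.mpr hne)) (fun A hA => absurd hA (by simp))
      rw [this]; simp
    · -- every minimal hitting set of card j+1 meets A₀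
      have hsub : (Finset.univ.filter fun H : Finset α =>
          H.card = j + 1 ∧ IsHittingSet G H ∧ ∀ H' ⊂ H, ¬ IsHittingSet G H') ⊆
          A₀.biUnion (fun x => Finset.univ.filter fun H : Finset α =>
            x ∈ H ∧ H.card = j + 1 ∧ IsHittingSet G H ∧ ∀ H' ⊂ H, ¬ IsHittingSet G H') := by
        intro H hH
        simp only [Finset.mem_filter, Finset.mem_univ, true_and] at hH
        obtain ⟨y, hy⟩ := hH.2.1 A₀ hA₀
        rw [Finset.mem_inter] at hy
        refine Finset.mem_biUnion.mpr ⟨y, hy.2, ?_⟩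
        simp only [Finset.mem_filter, Finset.mem_univ, true_and]
        exact ⟨hy.1, hH⟩
      have hfix : ∀ x ∈ A₀, (Finset.univ.filter fun H : Finset α =>
          x ∈ H ∧ H.card = j + 1 ∧ IsHittingSet G H ∧ ∀ H' ⊂ H, ¬ IsHittingSet G H').card
          ≤ s ^ j := by
        intro x _
        set Gx := G.filter (fun A => x ∉ A) with hGx
        have hGxcard : ∀ A ∈ Gx, A.card ≤ s := fun A hA =>
          hcard A (Finset.mem_filter.mp hA).1
        refine le_trans (Finset.card_le_card_of_injOn (fun H => H.erase x) ?_ ?_) (ih Gx hGxcard)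
        · intro H hH
          simp only [Finset.mem_coe, Finset.mem_filter, Finset.mem_univ, true_and] at hH ⊢
          obtain ⟨hxH, hHc, hHhit, hHmin⟩ := hH
          refine ⟨by rw [Finset.card_erase_of_mem hxH, hHc]; omega, ?_, ?_⟩
          · intro A hA
            rw [hGx, Finset.mem_filter] at hA
            obtain ⟨y, hy⟩ := hHhit A hA.1
            rw [Finset.mem_inter] at hy
            have : y ≠ x := fun h => hA.2 (h ▸ hy.2)
            exact ⟨y, Finset.mem_inter.mpr ⟨Finset.mem_erase.mpr ⟨this, hy.1⟩, hy.2⟩⟩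
          · intro K hK hKhit
            have hKH : insert x K ⊂ H := by
              constructor
              · intro a ha
                rcases Finset.mem_insert.mp ha with rfl | ha
                · exact hxH
                · exact Finset.erase_subset x H (hK.1 ha)
              · intro hcon
                have h1 : K.card < (H.erase x).card := Finset.card_lt_card hK
                have h2 : (insert x K).card ≤ K.card + 1 := Finset.card_insert_le x K
                have h3 : H.card ≤ K.card + 1 := le_trans (Finset.card_le_card hcon) h2
                rw [Finset.card_erase_of_mem hxH, hHc] at h1
                omega
            refine hHmin (insert x K) hKH (fun A hA => ?_)
            by_cases hxA : x ∈ A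
            · exact ⟨x, Finset.mem_inter.mpr ⟨Finset.mem_insert_self x K, hxA⟩⟩
            · obtain ⟨y, hy⟩ := hKhit A (by rw [hGx, Finset.mem_filter]; exact ⟨hA, hxA⟩)
              rw [Finset.mem_inter] at hy
              exact ⟨y, Finset.mem_inter.mpr ⟨Finset.mem_insert_of_mem hy.1, hy.2⟩⟩
        · intro H₁ h₁ H₂ h₂ he
          simp only [Finset.coe_filter, Set.mem_setOf_eq] at h₁ h₂
          simp only [] at he
          rw [← Finset.insert_erase h₁.2.1, he, Finset.insert_erase h₂.2.1]
      calc _ ≤ (A₀.biUnion _).card := Finset.card_le_card hsub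
        _ ≤ ∑ x ∈ A₀, (Finset.univ.filter fun H : Finset α =>
              x ∈ H ∧ H.card = j + 1 ∧ IsHittingSet G H ∧
              ∀ H' ⊂ H, ¬ IsHittingSet G H').card := Finset.card_biUnion_le
        _ ≤ ∑ _x ∈ A₀, s ^ j := Finset.sum_le_sum hfix
        _ = A₀.card * s ^ j := by rw [Finset.sum_const, smul_eq_mul]
        _ ≤ s * s ^ j := Nat.mul_le_mul_right _ (hcard A₀ hA₀)
        _ = s ^ (j + 1) := (pow_succ' s j).symm

theorem hitting_sets_count {α : Type*} [Fintype α] [DecidableEq α]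
    (G : Finset (Finset α)) (hG : G.Nonempty) (s : ℕ) (hs : 1 ≤ s)
    (hcard : ∀ A ∈ G, A.card ≤ s)
    (hempty : ∀ x : α, ∃ A ∈ G, x ∉ A) :
    (∀ H : Finset α, IsHittingSet G H → H.card ≠ 1) ∧
    (∀ i : ℕ, 2 ≤ i →
      (Finset.univ.filter fun H : Finset α =>
          H.card = i ∧ IsHittingSet G H ∧
          ∀ H' ⊂ H, ¬ IsHittingSet G H').card ≤ s ^ i) := by
  constructor
  · intro H hHit hone
    obtain ⟨x, rfl⟩ := Finset.card_eq_one.mp hone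
    obtain ⟨A, hA, hxA⟩ := hempty x
    obtain ⟨y, hy⟩ := hHit A hA
    rw [Finset.mem_inter, Finset.mem_singleton] at hy
    exact hxA (hy.1 ▸ hy.2)
  · intro i _
    exact aux_count s i G hcard
end

section
/- Let V be a finite set, let A be a finite family of subsets of V, let F ⊆ A be nonempty, and let τ ≥ 1 be real. For a family G of subsets of V and Y ⊆ V write G[Y] := {G ∈ G : Y ⊆ G}. Suppose X ⊆ V is inclusion-maximal among the sets Y ⊆ V satisfying |F[Y]|·|A| ≥ τ^{|Y|}·|A[Y]|·|F|. Then for every S ⊆ V disjoint from X, |F[X∪S]|·|A[X]| ≤ τ^{|S|}·|A[X∪S]|·|F[X]|. -/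
theorem homogeneous_of_maximal {V : Type*} [Fintype V] [DecidableEq V]
    (A F : Finset (Finset V)) (hFA : F ⊆ A) (hF : F.Nonempty)
    (τ : ℝ) (hτ : 1 ≤ τ) (X : Finset V)
    (hX : (τ : ℝ) ^ X.card * (((A.filter fun G => X ⊆ G).card : ℝ) * (F.card : ℝ)) ≤
      ((F.filter fun G => X ⊆ G).card : ℝ) * (A.card : ℝ))
    (hmax : ∀ Y : Finset V, X ⊂ Y →
      ¬ ((τ : ℝ) ^ Y.card * (((A.filter fun G => Y ⊆ G).card : ℝ) * (F.card : ℝ)) ≤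
          ((F.filter fun G => Y ⊆ G).card : ℝ) * (A.card : ℝ))) :
    ∀ S : Finset V, Disjoint X S →
      ((F.filter fun G => X ∪ S ⊆ G).card : ℝ) * ((A.filter fun G => X ⊆ G).card : ℝ) ≤
        τ ^ S.card *
          (((A.filter fun G => X ∪ S ⊆ G).card : ℝ) * ((F.filter fun G => X ⊆ G).card : ℝ)) := by
  intro S hS
  rcases S.eq_empty_or_nonempty with hSe | hSn
  · subst hSe
    simp only [Finset.union_empty, Finset.card_empty, pow_zero, one_mul]
    ring_nf
    exact le_refl _
  · have hsub : X ⊂ X ∪ S := by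
      obtain ⟨s, hs⟩ := hSn
      refine Finset.ssubset_iff_of_subset Finset.subset_union_left |>.mpr
        ⟨s, Finset.mem_union_right _ hs, Finset.disjoint_right.mp hS hs⟩
    have h2 := hmax (X ∪ S) hsub
    rw [not_le] at h2
    rw [Finset.card_union_of_disjoint hS, pow_add] at h2
    have hF0 : (0:ℝ) < F.card := by exact_mod_cast Finset.card_pos.mpr hF
    have hA0 : (0:ℝ) < A.card := lt_of_lt_of_le hF0 (by exact_mod_cast Finset.card_le_card hFA)
    have hτ0 : (0:ℝ) < τ ^ X.card := pow_pos (by linarith) _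
    have hτS : (0:ℝ) ≤ τ ^ S.card := le_of_lt (pow_pos (by linarith) _)
    have c1 : (0:ℝ) ≤ ((F.filter fun G => X ∪ S ⊆ G).card : ℝ) := Nat.cast_nonneg _
    have c2 : (0:ℝ) ≤ ((A.filter fun G => X ⊆ G).card : ℝ) := Nat.cast_nonneg _
    have c3 : (0:ℝ) ≤ ((A.filter fun G => X ∪ S ⊆ G).card : ℝ) := Nat.cast_nonneg _
    have c4 : (0:ℝ) ≤ ((F.filter fun G => X ⊆ G).card : ℝ) := Nat.cast_nonneg _
    have key := mul_le_mul h2.le hX (by positivity) (by positivity)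
    nlinarith [key, mul_pos (mul_pos hτ0 hA0) hF0,
      mul_nonneg (mul_nonneg hτ0.le hA0.le) hF0.le]
end

section
/- Let V be a finite set, let A be a finite family of subsets of V, let τ > 1 be real, let q ∈ ℕ, and let F ⊆ A. Then there exist a finite family S of subsets of V, each of cardinality at most q, and a subfamily F' ⊆ F, such that: (i) every member of F ∖ F' contains some B ∈ S; (ii) for every B ∈ S there exists a nonempty subfamily F_B ⊆ {F ∈ F : B ⊆ F} such that for every set S₀ ⊆ V disjoint from B, |{F ∈ F_B : B∪S₀ ⊆ F}|·|{A ∈ A : B ⊆ A}| ≤ τ^{|S₀|}·|{A ∈ A : B∪S₀ ⊆ A}|·|F_B|; (iii) |F'| ≤ τ^{−q−1}·|A| (as real numbers). -/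
open Finset

lemma spread_peel_aux {V : Type*} [Fintype V] [DecidableEq V]
    (A : Finset (Finset V)) (τ : ℝ) (hτ : 1 < τ) (q : ℕ) :
    ∀ n (𝒢 : Finset (Finset V)), 𝒢.card ≤ n → 𝒢 ⊆ A →
    ∃ (S : Finset (Finset V)) (F' : Finset (Finset V)),
      F' ⊆ 𝒢 ∧
      (∀ B ∈ S, B.card ≤ q) ∧
      (∀ G ∈ 𝒢 \ F', ∃ B ∈ S, B ⊆ G) ∧
      (∀ B ∈ S, ∃ FB : Finset (Finset V),
        FB.Nonempty ∧ FB ⊆ 𝒢.filter (fun G => B ⊆ G) ∧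
        ∀ S₀ : Finset V, Disjoint B S₀ →
          ((FB.filter fun G => B ∪ S₀ ⊆ G).card : ℝ) * ((A.filter fun G => B ⊆ G).card : ℝ) ≤
            τ ^ S₀.card *
              (((A.filter fun G => B ∪ S₀ ⊆ G).card : ℝ) * (FB.card : ℝ))) ∧
      ((F'.card : ℝ) ≤ (A.card : ℝ) / τ ^ (q + 1)) := by
  have hτ0 : (0:ℝ) < τ := zero_lt_one.trans hτ
  intro n
  induction n with
  | zero =>
    intro 𝒢 hcard _
    have h𝒢 : 𝒢 = ∅ := card_eq_zero.mp (Nat.le_zero.mp hcard)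
    subst h𝒢
    refine ⟨∅, ∅, Subset.refl _, by simp, by simp, by simp, by simp only [card_empty, Nat.cast_zero]; positivity⟩
  | succ n ih =>
    intro 𝒢 hcard h𝒢A
    by_cases hsmall : (𝒢.card : ℝ) ≤ (A.card : ℝ) / τ ^ (q + 1)
    · exact ⟨∅, 𝒢, Subset.refl _, by simp, by simp, by simp, hsmall⟩
    · push_neg at hsmall
      have h𝒢ne : 𝒢.Nonempty := by
        rcases 𝒢.eq_empty_or_nonempty with h | h
        · exfalso; rw [h] at hsmall; simp at hsmall
          have : (0:ℝ) ≤ (A.card : ℝ) / τ ^ (q+1) := by positivity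
          linarith
        · exact h
      -- the domain of candidate sets
      set D : Finset (Finset V) :=
        (univ : Finset V).powerset.filter (fun B => (𝒢.filter fun G => B ⊆ G).Nonempty) with hD
      have hemptyD : (∅ : Finset V) ∈ D := by
        rw [hD, mem_filter, mem_powerset]
        refine ⟨empty_subset _, ?_⟩
        simpa using h𝒢ne
      set g : Finset V → ℝ := fun B => ((𝒢.filter fun G => B ⊆ G).card : ℝ) with hg
      set a : Finset V → ℝ := fun B => ((A.filter fun G => B ⊆ G).card : ℝ) with ha
      obtain ⟨B, hBD, hBmax⟩ :=
        D.exists_max_image (fun B => g B / (a B * τ ^ B.card)) ⟨∅, hemptyD⟩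
      have hgBne : (𝒢.filter fun G => B ⊆ G).Nonempty := (mem_filter.mp hBD).2
      have hsub : (𝒢.filter fun G => B ⊆ G) ⊆ (A.filter fun G => B ⊆ G) :=
        filter_subset_filter _ h𝒢A
      have hgBpos : (0:ℝ) < g B := by
        simp only [hg]; exact_mod_cast card_pos.mpr hgBne
      have hgaB : g B ≤ a B := by simp only [hg, ha]; exact_mod_cast card_le_card hsub
      have haBpos : (0:ℝ) < a B := lt_of_lt_of_le hgBpos hgaB
      have hApos : (0:ℝ) < (A.card : ℝ) := by
        have := h𝒢ne.card_pos
        have := card_le_card h𝒢A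
        exact_mod_cast by omega
      -- key: B.card ≤ q
      have hkey := hBmax ∅ hemptyD
      have hg0 : g ∅ = (𝒢.card : ℝ) := by rw [hg]; simp
      have ha0 : a ∅ = (A.card : ℝ) := by rw [ha]; simp
      have hBq : B.card ≤ q := by
        by_contra hqlt
        push_neg at hqlt
        have h1 : (𝒢.card : ℝ) / (A.card : ℝ) ≤ g B / (a B * τ ^ B.card) := by
          simpa [hg0, ha0] using hkey
        have h2 : g B / (a B * τ ^ B.card) ≤ 1 / τ ^ B.card := by
          rw [div_le_div_iff₀ (by positivity) (by positivity)]
          nlinarith [pow_pos hτ0 B.card]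
        have h3 : (1:ℝ) / τ ^ (q+1) < (𝒢.card : ℝ) / (A.card : ℝ) := by
          rw [div_lt_div_iff₀ (by positivity) hApos]
          have := hsmall
          rw [div_lt_iff₀ (by positivity)] at this
          linarith
        have h4 : (1:ℝ) / τ ^ (q+1) < 1 / τ ^ B.card := lt_of_lt_of_le (h3.trans_le h1) h2
        rw [div_lt_div_iff₀ (by positivity) (by positivity)] at h4
        simp only [one_mul] at h4
        have := (pow_lt_pow_iff_right₀ hτ).mp h4
        omega
      -- spread property for B
      have hspread : ∀ S₀ : Finset V, Disjoint B S₀ →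
          (((𝒢.filter fun G => B ⊆ G).filter fun G => B ∪ S₀ ⊆ G).card : ℝ) *
              ((A.filter fun G => B ⊆ G).card : ℝ) ≤
            τ ^ S₀.card * (((A.filter fun G => B ∪ S₀ ⊆ G).card : ℝ) *
              ((𝒢.filter fun G => B ⊆ G).card : ℝ)) := by
        intro S₀ hdisj
        have hfe : ((𝒢.filter fun G => B ⊆ G).filter fun G => B ∪ S₀ ⊆ G)
            = 𝒢.filter fun G => B ∪ S₀ ⊆ G := by
          ext G
          simp only [mem_filter]
          constructor
          · rintro ⟨⟨h1, _⟩, h3⟩; exact ⟨h1, h3⟩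
          · rintro ⟨h1, h3⟩; exact ⟨⟨h1, subset_union_left.trans h3⟩, h3⟩
        rw [hfe]
        by_cases hne : (𝒢.filter fun G => B ∪ S₀ ⊆ G).Nonempty
        · have hB'D : B ∪ S₀ ∈ D := by
            rw [hD, mem_filter, mem_powerset]
            exact ⟨subset_univ _, hne⟩
          have hmax := hBmax _ hB'D
          have hcardU : (B ∪ S₀).card = B.card + S₀.card := card_union_of_disjoint hdisj
          have hsub' : (𝒢.filter fun G => B ∪ S₀ ⊆ G) ⊆ (A.filter fun G => B ∪ S₀ ⊆ G) :=
            filter_subset_filter _ h𝒢A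
          have hgB'pos : (0:ℝ) < g (B ∪ S₀) := by
            simp only [hg]; exact_mod_cast card_pos.mpr hne
          have hga' : g (B ∪ S₀) ≤ a (B ∪ S₀) := by
            simp only [hg, ha]; exact_mod_cast card_le_card hsub'
          have haB'pos : (0:ℝ) < a (B ∪ S₀) := lt_of_lt_of_le hgB'pos hga'
          rw [div_le_div_iff₀ (by positivity) (by positivity)] at hmax
          rw [hcardU, pow_add] at hmax
          have hcast : g (B ∪ S₀) * (a B) ≤ τ ^ S₀.card * (a (B ∪ S₀) * g B) := by
            have hp : (0:ℝ) < τ ^ B.card := pow_pos hτ0 _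
            nlinarith
          simpa [hg, ha] using hcast
        · rw [not_nonempty_iff_eq_empty] at hne
          rw [hne]
          simp only [card_empty, Nat.cast_zero, zero_mul]
          positivity
      -- recurse on the rest
      set 𝒢' : Finset (Finset V) := 𝒢 \ (𝒢.filter fun G => B ⊆ G) with h𝒢'
      have h𝒢'card : 𝒢'.card ≤ n := by
        have hk : 1 ≤ (𝒢.filter fun G => B ⊆ G).card := card_pos.mpr hgBne
        rw [h𝒢', card_sdiff_of_subset (filter_subset _ _)]
        omega
      obtain ⟨S', F'', hF''sub, hS'q, hcover, hhom, hF''card⟩ :=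
        ih 𝒢' h𝒢'card ((sdiff_subset).trans h𝒢A)
      refine ⟨insert B S', F'', hF''sub.trans sdiff_subset, ?_, ?_, ?_, hF''card⟩
      · intro B' hB'
        rcases mem_insert.mp hB' with rfl | hB'
        · exact hBq
        · exact hS'q B' hB'
      · intro G hG
        rw [mem_sdiff] at hG
        by_cases hBG : B ⊆ G
        · exact ⟨B, mem_insert_self _ _, hBG⟩
        · have hG' : G ∈ 𝒢' \ F'' := by
            rw [mem_sdiff, h𝒢', mem_sdiff, mem_filter]
            exact ⟨⟨hG.1, fun h => hBG h.2⟩, hG.2⟩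
          obtain ⟨B'', hB''S, hB''G⟩ := hcover G hG'
          exact ⟨B'', mem_insert_of_mem hB''S, hB''G⟩
      · intro B' hB'
        rcases mem_insert.mp hB' with rfl | hB'
        · exact ⟨𝒢.filter fun G => B' ⊆ G, hgBne, Subset.refl _, hspread⟩
        · obtain ⟨FB, hFBne, hFBsub, hFBspread⟩ := hhom B' hB'
          refine ⟨FB, hFBne, hFBsub.trans (filter_subset_filter _ sdiff_subset), hFBspread⟩

theorem spread_approximation_peeling {V : Type*} [Fintype V] [DecidableEq V]
    (A : Finset (Finset V)) (τ : ℝ) (hτ : 1 < τ) (q : ℕ)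
    (F : Finset (Finset V)) (hFA : F ⊆ A) :
    ∃ (S : Finset (Finset V)) (F' : Finset (Finset V)),
      F' ⊆ F ∧
      (∀ B ∈ S, B.card ≤ q) ∧
      (∀ G ∈ F \ F', ∃ B ∈ S, B ⊆ G) ∧
      (∀ B ∈ S, ∃ FB : Finset (Finset V),
        FB.Nonempty ∧ FB ⊆ F.filter (fun G => B ⊆ G) ∧
        ∀ S₀ : Finset V, Disjoint B S₀ →
          ((FB.filter fun G => B ∪ S₀ ⊆ G).card : ℝ) * ((A.filter fun G => B ⊆ G).card : ℝ) ≤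
            τ ^ S₀.card *
              (((A.filter fun G => B ∪ S₀ ⊆ G).card : ℝ) * (FB.card : ℝ))) ∧
      ((F'.card : ℝ) ≤ (A.card : ℝ) / τ ^ (q + 1)) := by
  exact spread_peel_aux A τ hτ q F.card F le_rfl hFA
end

section
/- For all natural numbers n, s, x with s ≤ x ≤ n, s ≥ 0 and 4s < n, the following real inequalities hold: (n−s)!/(n−x)! ≥ ((n−s)/e)^{x−s} and (n−s)!·4^{x−s} ≥ n^{x−s}·(n−x)!. (In particular, the family of all permutations of an n-element set, viewed as n-element subsets of [n]×[n], is (n/4, n/4)-spread.) -/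
lemma fact_ratio_lower : ∀ (k m : ℕ), k ≤ m →
    ((m : ℝ) / Real.exp 1) ^ k * ((m - k).factorial : ℝ) ≤ (m.factorial : ℝ) := by
  intro k
  induction k with
  | zero => intro m _; simp
  | succ k ih =>
    intro m hkm
    obtain ⟨m', rfl⟩ : ∃ m', m = m' + 1 := ⟨m - 1, by omega⟩
    have hk : k ≤ m' := by omega
    have h1 := ih m' hk
    have hsub : m' + 1 - (k + 1) = m' - k := by omega
    rw [hsub]
    have hfac : (((m' + 1).factorial : ℕ) : ℝ) = ((m' : ℝ) + 1) * (m'.factorial : ℝ) := by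
      rw [Nat.factorial_succ]; push_cast; ring
    rw [hfac]
    have hfpos : (0 : ℝ) < ((m' - k).factorial : ℝ) := by
      exact_mod_cast Nat.factorial_pos _
    have he : (0 : ℝ) < Real.exp 1 := Real.exp_pos 1
    have key : (((m' + 1 : ℕ) : ℝ) / Real.exp 1) ^ (k + 1) ≤
        ((m' : ℝ) + 1) * ((m' : ℝ) / Real.exp 1) ^ k := by
      rcases Nat.eq_zero_or_pos m' with h0 | hpos
      · subst h0
        have hk0 : k = 0 := by omega
        subst hk0
        simp only [pow_zero, mul_one]
        push_cast
        rw [pow_one, div_le_iff₀ he]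
        nlinarith [Real.add_one_le_exp (1 : ℝ)]
      · have hm1 : (1 : ℝ) ≤ (m' : ℝ) := by exact_mod_cast hpos
        have hmpos : (0 : ℝ) < (m' : ℝ) := by linarith
        -- (1 + 1/m')^k ≤ exp 1
        have hstep : ((m' : ℝ) + 1) / (m' : ℝ) ≤ Real.exp (1 / (m' : ℝ)) := by
          have := Real.add_one_le_exp (1 / (m' : ℝ))
          rw [add_div, div_self (ne_of_gt hmpos)] at *
          linarith
        have hpow : (((m' : ℝ) + 1) / (m' : ℝ)) ^ k ≤ Real.exp 1 := by
          calc (((m' : ℝ) + 1) / (m' : ℝ)) ^ k ≤ (Real.exp (1 / (m' : ℝ))) ^ k := by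
                apply pow_le_pow_left₀ (by positivity) hstep
            _ = Real.exp (k / (m' : ℝ)) := by
                rw [← Real.exp_nat_mul]; ring_nf
            _ ≤ Real.exp 1 := by
                apply Real.exp_le_exp.mpr
                rw [div_le_one hmpos]
                exact_mod_cast hk
        -- rearrange
        have hineq : ((m' : ℝ) + 1) ^ k ≤ Real.exp 1 * (m' : ℝ) ^ k := by
          have := mul_le_mul_of_nonneg_right hpow (pow_nonneg (le_of_lt hmpos) k)
          rwa [div_pow, div_mul_cancel₀] at this
          positivity
        push_cast
        rw [div_pow, div_pow, mul_div_assoc',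
          div_le_div_iff₀ (by positivity) (by positivity), pow_succ (Real.exp 1) k]
        calc ((m' : ℝ) + 1) ^ (k + 1) * Real.exp 1 ^ k
            = ((m' : ℝ) + 1) * (((m' : ℝ) + 1) ^ k * Real.exp 1 ^ k) := by ring
          _ ≤ ((m' : ℝ) + 1) * ((Real.exp 1 * (m' : ℝ) ^ k) * Real.exp 1 ^ k) := by
              apply mul_le_mul_of_nonneg_left _ (by positivity)
              apply mul_le_mul_of_nonneg_right hineq (by positivity)
          _ = ((m' : ℝ) + 1) * (m' : ℝ) ^ k * (Real.exp 1 ^ k * Real.exp 1) := by ring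
    calc (((m' + 1 : ℕ) : ℝ) / Real.exp 1) ^ (k + 1) * ((m' - k).factorial : ℝ)
        ≤ ((m' : ℝ) + 1) * ((m' : ℝ) / Real.exp 1) ^ k * ((m' - k).factorial : ℝ) := by
          exact mul_le_mul_of_nonneg_right key (le_of_lt hfpos)
      _ = ((m' : ℝ) + 1) * (((m' : ℝ) / Real.exp 1) ^ k * ((m' - k).factorial : ℝ)) := by ring
      _ ≤ ((m' : ℝ) + 1) * (m'.factorial : ℝ) := by
          apply mul_le_mul_of_nonneg_left h1 (by positivity)

theorem factorial_ratio_spread_bounds (n s x : ℕ) (hsx : s ≤ x) (hxn : x ≤ n)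
    (hs : 4 * s < n) :
    ((n - s).factorial : ℝ) / ((n - x).factorial : ℝ) ≥
        (((n - s : ℕ) : ℝ) / Real.exp 1) ^ (x - s) ∧
    ((n - s).factorial : ℝ) * 4 ^ (x - s) ≥ (n : ℝ) ^ (x - s) * ((n - x).factorial : ℝ) := by
  set k := x - s with hkdef
  set m := n - s with hmdef
  have hkm : k ≤ m := by omega
  have hnx : n - x = m - k := by omega
  have haux := fact_ratio_lower k m hkm
  rw [hnx]
  have hfpos : (0 : ℝ) < ((m - k).factorial : ℝ) := by exact_mod_cast Nat.factorial_pos _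
  have he : (0 : ℝ) < Real.exp 1 := Real.exp_pos 1
  constructor
  · rw [ge_iff_le, le_div_iff₀ hfpos]
    exact haux
  · -- n ≤ 4 * m / e
    have he3 : Real.exp 1 ≤ 3 := by
      have := Real.exp_one_lt_d9
      linarith
    have hm3 : 3 * (n : ℝ) ≤ 4 * (m : ℝ) := by
      have : 3 * n ≤ 4 * m := by omega
      exact_mod_cast this
    have hbase : (n : ℝ) ≤ 4 * ((m : ℝ) / Real.exp 1) := by
      rw [mul_div_assoc', le_div_iff₀ he]
      nlinarith [Real.exp_pos 1, Nat.cast_nonneg (α := ℝ) n]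
    have hpow : (n : ℝ) ^ k ≤ ((m : ℝ) / Real.exp 1) ^ k * 4 ^ k := by
      calc (n : ℝ) ^ k ≤ (4 * ((m : ℝ) / Real.exp 1)) ^ k :=
            pow_le_pow_left₀ (Nat.cast_nonneg n) hbase k
        _ = ((m : ℝ) / Real.exp 1) ^ k * 4 ^ k := by rw [mul_pow]; ring
    rw [ge_iff_le]
    calc (n : ℝ) ^ k * ((m - k).factorial : ℝ)
        ≤ (((m : ℝ) / Real.exp 1) ^ k * 4 ^ k) * ((m - k).factorial : ℝ) :=
          mul_le_mul_of_nonneg_right hpow (le_of_lt hfpos)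
      _ = (((m : ℝ) / Real.exp 1) ^ k * ((m - k).factorial : ℝ)) * 4 ^ k := by ring
      _ ≤ (m.factorial : ℝ) * 4 ^ k := by
          apply mul_le_mul_of_nonneg_right haux (by positivity)
end
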